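/- arXiv:2602.23470 — 3 statements merged into one kernel-verified Lean document; each statement's English description precedes it below -/
import Mathlib

section
/- Assume Assumption (M). Then for every δ > 0, the infimum of h(x,y) over all x, y ∈ ℝ² with |x − y| ≥ δ is strictly positive. -/
noncomputable section

open MeasureTheory Filter Topology Real
open scoped RealInnerProductSpace

/-- The plane `ℝ²` as a Euclidean space. -/
abbrev E2 : Type := EuclideanSpace ℝ (Fin 2)

/-- The point of `ℝ²` with coordinates `(x, y)`. -/
def pt (x y : ℝ) : E2 := WithLp.toLp 2 ![x, y]

/-- `ℤ²`-periodicity of a function on `ℝ²`. -/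
def ZPer (f : E2 → ℝ) : Prop := ∀ (x : E2) (k : ℤ × ℤ), f (x + pt k.1 k.2) = f x

/-- **Assumption (M)**: `V` is smooth, `ℤ²`-periodic, `max V = 0` attained exactly on `ℤ²`,
and the Hessian of `V` at the origin has the two distinct eigenvalues `−a²` and `−b²`,
with `0 < a < b` (witnessed by unit eigenvectors). -/
structure AssumptionM (V : E2 → ℝ) (a b : ℝ) : Prop where
  smooth : ContDiff ℝ (⊤ : ℕ∞) V
  periodic : ZPer V
  nonpos : ∀ x, V x ≤ 0
  zeroSet : ∀ x : E2, V x = 0 ↔ ∃ k : ℤ × ℤ, x = pt k.1 k.2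
  ha : 0 < a
  hab : a < b
  eigen : ∃ va vb : E2, ‖va‖ = 1 ∧ ‖vb‖ = 1 ∧
    fderiv ℝ (fun y => gradient V y) 0 va = (-(a ^ 2)) • va ∧
    fderiv ℝ (fun y => gradient V y) 0 vb = (-(b ^ 2)) • vb

/-- Action of a curve `η` on the time interval `[t₁, t₂]` for the Lagrangian `½|q|² − V(x)`. -/
def actInt (V : E2 → ℝ) (t₁ t₂ : ℝ) (η : ℝ → E2) : ℝ :=
  ∫ s in t₁..t₂, ((1 / 2) * ‖deriv η s‖ ^ 2 - V (η s))

/-- `h(x,y)`: the infimum of the action over Lipschitz curves from `x` to `y`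
in any nonnegative time `t`. -/
def hmin (V : E2 → ℝ) (x y : E2) : ℝ :=
  sInf {A : ℝ | ∃ t : ℝ, 0 ≤ t ∧ ∃ η : ℝ → E2,
    (∃ K : NNReal, LipschitzOnWith K η (Set.Icc 0 t)) ∧ η 0 = x ∧ η t = y ∧
    A = actInt V 0 t η}

section Aux
open Set

/-- Norm of `deriv` of a Lipschitz function is bounded by the Lipschitz constant. -/
theorem lip_norm_deriv_le {F : Type*} [NormedAddCommGroup F] [NormedSpace ℝ F]
    {K : NNReal} {g : ℝ → F} (hg : LipschitzWith K g) (s : ℝ) : ‖deriv g s‖ ≤ K := by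
  by_cases h : DifferentiableAt ℝ g s
  · have hd := h.hasDerivAt
    rw [hasDerivAt_iff_tendsto_slope] at hd
    have hne : (𝓝[≠] s).NeBot := by infer_instance
    refine le_of_tendsto (hd.norm) ?_
    filter_upwards [self_mem_nhdsWithin] with y hy
    have hys : y - s ≠ 0 := sub_ne_zero.2 hy
    rw [slope_def_module, norm_smul, norm_inv, Real.norm_eq_abs]
    have : ‖g y - g s‖ ≤ K * |y - s| := by
      have := hg.dist_le_mul y s
      rwa [dist_eq_norm, dist_eq_norm, Real.norm_eq_abs] at this
    calc |y - s|⁻¹ * ‖g y - g s‖ ≤ |y - s|⁻¹ * (K * |y - s|) := by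
          apply mul_le_mul_of_nonneg_left this (by positivity)
      _ = K := by field_simp
  · rw [deriv_zero_of_not_differentiableAt h]
    simpa using K.2

/-- FTC for Lipschitz functions, via dominated convergence of difference quotients. -/
theorem lipschitz_ftc {K : NNReal} {g : ℝ → ℝ} (hg : LipschitzWith K g) {a b : ℝ}
    (hab : a ≤ b) : g b - g a = ∫ s in a..b, deriv g s := by
  set u : ℕ → ℝ := fun n => 1 / (n + 1) with hu
  have hu0 : ∀ n, 0 < u n := fun n => by positivity
  have hulim : Tendsto u atTop (𝓝 0) := tendsto_one_div_add_atTop_nhds_zero_nat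
  have gcont : Continuous g := hg.continuous
  have gint : ∀ c d : ℝ, IntervalIntegrable g volume c d := fun c d =>
    gcont.intervalIntegrable _ _
  -- convergence of averages at a point
  have avg : ∀ c : ℝ, Tendsto (fun n => (∫ s in c..c + u n, g s) / u n) atTop (𝓝 (g c)) := by
    intro c
    have hF : HasDerivAt (fun x => ∫ s in c..x, g s) (g c) c :=
      intervalIntegral.integral_hasDerivAt_right (gint c c)
        (gcont.stronglyMeasurableAtFilter _ _) gcont.continuousAt
    rw [hasDerivAt_iff_tendsto_slope] at hF
    have hy : Tendsto (fun n => c + u n) atTop (𝓝[≠] c) := by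
      apply tendsto_nhdsWithin_of_tendsto_nhds_of_eventually_within
      · simpa using tendsto_const_nhds.add hulim
      · filter_upwards with n
        simp only [Set.mem_compl_iff, Set.mem_singleton_iff]
        intro hfalse
        have := hu0 n
        nlinarith [congrArg (fun x => x - c) hfalse]
    have := hF.comp hy
    have heq : (fun n => slope (fun x => ∫ s in c..x, g s) c (c + u n)) =
        fun n => (∫ s in c..c + u n, g s) / u n := by
      funext n
      rw [slope_def_field]
      simp [intervalIntegral.integral_same]
    rwa [Function.comp_def, heq] at this
  -- Step A : rewrite the integral of the difference quotient
  have stepA : ∀ n, (∫ s in a..b, (g (s + u n) - g s) / u n)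
      = ((∫ s in b..b + u n, g s) - ∫ s in a..a + u n, g s) / u n := by
    intro n
    rw [intervalIntegral.integral_div]
    congr 1
    have h1 : (∫ s in a..b, (g (s + u n) - g s))
        = (∫ s in a..b, g (s + u n)) - ∫ s in a..b, g s := by
      apply intervalIntegral.integral_sub
      · exact (gcont.comp (continuous_id.add continuous_const)).intervalIntegrable (μ := volume) a b
      · exact gint a b
    rw [h1, intervalIntegral.integral_comp_add_right]
    have h2 : (∫ s in a + u n..b + u n, g s)
        = (∫ s in a + u n..b, g s) + ∫ s in b..b + u n, g s :=
      (intervalIntegral.integral_add_adjacent_intervals (gint _ _) (gint _ _)).symm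
    have h3 : (∫ s in a..b, g s)
        = (∫ s in a..a + u n, g s) + ∫ s in a + u n..b, g s :=
      (intervalIntegral.integral_add_adjacent_intervals (gint _ _) (gint _ _)).symm
    rw [h2, h3]; ring
  -- Step B : limit of the right-hand side
  have stepB : Tendsto (fun n => ((∫ s in b..b + u n, g s) - ∫ s in a..a + u n, g s) / u n)
      atTop (𝓝 (g b - g a)) := by
    have := (avg b).sub (avg a)
    simpa [sub_div] using this
  -- Step C : dominated convergence
  have stepC : Tendsto (fun n => ∫ s in a..b, (g (s + u n) - g s) / u n) atTop
      (𝓝 (∫ s in a..b, deriv g s)) := by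
    apply intervalIntegral.tendsto_integral_filter_of_dominated_convergence (fun _ => (K : ℝ))
    · filter_upwards with n
      exact ((gcont.comp (continuous_id.add continuous_const)).sub gcont).div_const _
        |>.aestronglyMeasurable.restrict
    · filter_upwards with n
      filter_upwards with x _
      have h1 : |g (x + u n) - g x| ≤ K * |u n| := by
        have := hg.dist_le_mul (x + u n) x
        rwa [Real.dist_eq, Real.dist_eq, add_sub_cancel_left] at this
      rw [Real.norm_eq_abs, abs_div]
      rw [div_le_iff₀ (abs_pos.2 (hu0 n).ne')]
      exact h1
    · exact intervalIntegrable_const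
    · have hae : ∀ᵐ x : ℝ, DifferentiableAt ℝ g x := hg.ae_differentiableAt
      filter_upwards [hae] with x hx _
      have hd := hx.hasDerivAt
      rw [hasDerivAt_iff_tendsto_slope] at hd
      have hy : Tendsto (fun n => x + u n) atTop (𝓝[≠] x) := by
        apply tendsto_nhdsWithin_of_tendsto_nhds_of_eventually_within
        · simpa using tendsto_const_nhds.add hulim
        · filter_upwards with n
          simp only [Set.mem_compl_iff, Set.mem_singleton_iff]
          intro hfalse
          have := hu0 n
          nlinarith [congrArg (fun z => z - x) hfalse]
      have := hd.comp hy
      have heq : (fun n => slope g x (x + u n)) = fun n => (g (x + u n) - g x) / u n := by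
        funext n
        rw [slope_def_field]
        simp
      rwa [Function.comp_def, heq] at this
  have := tendsto_nhds_unique (by rw [funext stepA] at stepC; exact stepC) stepB
  linarith [this]

/-- Bounded measurable functions are interval integrable. -/
theorem bdd_meas_intervalIntegrable {f : ℝ → ℝ} {a b : ℝ}
    (hm : AEStronglyMeasurable f (volume.restrict (Set.uIoc a b)))
    (C : ℝ) (hC : ∀ s, |f s| ≤ C) : IntervalIntegrable f volume a b := by
  rw [intervalIntegrable_iff]
  exact Integrable.mono' ((integrableOn_const_iff (C := C)).2 (Or.inr measure_Ioc_lt_top)) hm (ae_of_all _ fun s => by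
    simpa [Real.norm_eq_abs] using hC s)

/-- Displacement is bounded by the integral of the speed, for Lipschitz curves. -/
theorem lipschitz_displacement {F : Type*} [NormedAddCommGroup F] [InnerProductSpace ℝ F]
    [FiniteDimensional ℝ F] [MeasurableSpace F] [BorelSpace F]
    {K : NNReal} {η : ℝ → F} (hη : LipschitzWith K η) {a b : ℝ} (hab : a ≤ b) :
    ‖η b - η a‖ ≤ ∫ s in a..b, ‖deriv η s‖ := by
  by_cases hz : η b - η a = 0
  · rw [hz, norm_zero]
    exact intervalIntegral.integral_nonneg hab fun s _ => norm_nonneg _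
  set e : F := ‖η b - η a‖⁻¹ • (η b - η a) with he_def
  have he : ‖e‖ = 1 := norm_smul_inv_norm (𝕜 := ℝ) hz
  set g : ℝ → ℝ := fun s => ⟪e, η s⟫ with hg_def
  have hgl : LipschitzWith K g := by
    apply LipschitzWith.of_dist_le_mul
    intro s t
    rw [Real.dist_eq]
    have : g s - g t = ⟪e, η s - η t⟫ := by rw [hg_def]; simp [inner_sub_right]
    rw [this]
    calc |⟪e, η s - η t⟫| ≤ ‖e‖ * ‖η s - η t‖ := abs_real_inner_le_norm e _
      _ = dist (η s) (η t) := by rw [he, one_mul, dist_eq_norm]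
      _ ≤ K * dist s t := hη.dist_le_mul s t
  have hgb : g b - g a = ‖η b - η a‖ := by
    rw [hg_def]
    have : ⟪e, η b⟫ - ⟪e, η a⟫ = ⟪e, η b - η a⟫ := by simp [inner_sub_right]
    rw [this, he_def, real_inner_smul_left, real_inner_self_eq_norm_sq]
    have hpos : ‖η b - η a‖ ≠ 0 := by simpa using hz
    field_simp
  have hftc : g b - g a = ∫ s in a..b, deriv g s := lipschitz_ftc hgl hab
  rw [← hgb, hftc]
  apply intervalIntegral.integral_mono_ae hab
  · exact bdd_meas_intervalIntegrable ((measurable_deriv g).aestronglyMeasurable.restrict)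
      K (fun s => by simpa [Real.norm_eq_abs] using lip_norm_deriv_le hgl s)
  · exact bdd_meas_intervalIntegrable
      (((measurable_deriv η).norm).aestronglyMeasurable.restrict)
      K (fun s => by
        rw [abs_of_nonneg (norm_nonneg _)]
        exact lip_norm_deriv_le hη s)
  · filter_upwards [hη.ae_differentiableAt] with s hs
    have hd : HasDerivAt η (deriv η s) s := hs.hasDerivAt
    have hgd : HasDerivAt g (⟪e, deriv η s⟫) s := by
      have := (hasDerivAt_const s e).inner ℝ hd
      simpa using this
    rw [hgd.deriv]
    calc ⟪e, deriv η s⟫ ≤ ‖e‖ * ‖deriv η s‖ := real_inner_le_norm e _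
      _ = ‖deriv η s‖ := by rw [he, one_mul]

theorem pt_apply_zero (x y : ℝ) : pt x y 0 = x := rfl
theorem pt_apply_one (x y : ℝ) : pt x y 1 = y := rfl

theorem E2_norm_eq (z : E2) : ‖z‖ = Real.sqrt (z 0 ^ 2 + z 1 ^ 2) := by
  rw [EuclideanSpace.norm_eq, Fin.sum_univ_two]
  simp [Real.norm_eq_abs, sq_abs]

theorem coord_le_norm (z : E2) (i : Fin 2) : |z i| ≤ ‖z‖ := by
  rw [E2_norm_eq, ← Real.sqrt_sq_eq_abs]
  apply Real.sqrt_le_sqrt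
  have h0 := sq_nonneg (z 0)
  have h1 := sq_nonneg (z 1)
  fin_cases i <;> simp <;> nlinarith

theorem pt_add (a b c d : ℝ) : pt a b + pt c d = pt (a + c) (b + d) := by
  ext i; fin_cases i <;> rfl

theorem pt_sub_coord (z : E2) (a b : ℝ) : (z - pt a b) 0 = z 0 - a ∧ (z - pt a b) 1 = z 1 - b :=
  ⟨rfl, rfl⟩

/-- Distinct lattice points are at distance at least 1. -/
theorem lattice_dist {k k' : ℤ × ℤ} (h : k ≠ k') :
    1 ≤ dist (pt k.1 k.2) (pt k'.1 k'.2) := by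
  rw [dist_eq_norm]
  have h01 : k.1 ≠ k'.1 ∨ k.2 ≠ k'.2 := by
    by_contra hc
    push_neg at hc
    exact h (Prod.ext hc.1 hc.2)
  rcases h01 with h1 | h1
  · have := coord_le_norm (pt k.1 k.2 - pt k'.1 k'.2) 0
    have hco : (pt (k.1 : ℝ) k.2 - pt k'.1 k'.2) 0 = (k.1 : ℝ) - k'.1 := rfl
    rw [hco] at this
    refine le_trans ?_ this
    rw [← Int.cast_sub, ← Int.cast_abs]
    exact_mod_cast Int.one_le_abs (sub_ne_zero.2 h1)
  · have := coord_le_norm (pt k.1 k.2 - pt k'.1 k'.2) 1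
    have hco : (pt (k.1 : ℝ) k.2 - pt k'.1 k'.2) 1 = (k.2 : ℝ) - k'.2 := rfl
    rw [hco] at this
    refine le_trans ?_ this
    rw [← Int.cast_sub, ← Int.cast_abs]
    exact_mod_cast Int.one_le_abs (sub_ne_zero.2 h1)

/-- Crossing lemma: a continuous function going from below `r` to above `2r` passes through
an interval where it stays within `[r, 2r]`, with endpoint values `r` and `2r`. -/
theorem crossing {f : ℝ → ℝ} {α β r : ℝ} (hαβ : α ≤ β) (hf : ContinuousOn f (Icc α β))
    (h1 : f α < r) (h2 : 2 * r ≤ f β) (hr : 0 < r) :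
    ∃ u v, α ≤ u ∧ u ≤ v ∧ v ≤ β ∧ (∀ s ∈ Icc u v, r ≤ f s ∧ f s ≤ 2 * r) ∧
      f u = r ∧ f v = 2 * r := by
  have hr2 : r ≤ 2 * r := by linarith
  set A := Icc α β ∩ f ⁻¹' {2 * r} with hA
  have hAne : A.Nonempty := by
    have := intermediate_value_Icc hαβ hf
    have hmem : 2 * r ∈ Icc (f α) (f β) := ⟨by linarith, h2⟩
    obtain ⟨s, hs, hfs⟩ := this hmem
    exact ⟨s, hs, hfs⟩
  have hAclosed : IsClosed A := hf.preimage_isClosed_of_isClosed isClosed_Icc isClosed_singleton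
  have hAcompact : IsCompact A := isCompact_Icc.of_isClosed_subset hAclosed inter_subset_left
  set v := sInf A with hv
  have hvA : v ∈ A := hAcompact.sInf_mem hAne
  have hvIcc : v ∈ Icc α β := hvA.1
  have hfv : f v = 2 * r := hvA.2
  set B := Icc α v ∩ f ⁻¹' {r} with hB
  have hsub : Icc α v ⊆ Icc α β := Icc_subset_Icc le_rfl hvIcc.2
  have hfB : ContinuousOn f (Icc α v) := hf.mono hsub
  have hBne : B.Nonempty := by
    have := intermediate_value_Icc hvIcc.1 hfB
    have hmem : r ∈ Icc (f α) (f v) := ⟨h1.le, by rw [hfv]; linarith⟩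
    obtain ⟨s, hs, hfs⟩ := this hmem
    exact ⟨s, hs, hfs⟩
  have hBclosed : IsClosed B := hfB.preimage_isClosed_of_isClosed isClosed_Icc isClosed_singleton
  have hBcompact : IsCompact B := isCompact_Icc.of_isClosed_subset hBclosed inter_subset_left
  set u := sSup B with hu
  have huB : u ∈ B := hBcompact.sSup_mem hBne
  have hfu : f u = r := huB.2
  have huIcc : u ∈ Icc α v := huB.1
  refine ⟨u, v, huIcc.1, huIcc.2, hvIcc.2, ?_, hfu, hfv⟩
  intro s hs
  have hsαβ : s ∈ Icc α β := ⟨le_trans huIcc.1 hs.1, le_trans hs.2 hvIcc.2⟩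
  constructor
  · by_contra hcon
    push_neg at hcon
    have hIVT := intermediate_value_Icc hs.2 (hf.mono (Icc_subset_Icc hsαβ.1 hvIcc.2))
    have hmem : r ∈ Icc (f s) (f v) := ⟨hcon.le, by rw [hfv]; linarith⟩
    obtain ⟨s', hs', hfs'⟩ := hIVT hmem
    have hs'B : s' ∈ B := ⟨⟨le_trans hsαβ.1 hs'.1, hs'.2⟩, hfs'⟩
    have : s' ≤ u := le_csSup hBcompact.bddAbove hs'B
    have hsu : s = u := le_antisymm (le_trans hs'.1 this) hs.1
    rw [hsu, hfu] at hcon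
    exact absurd hcon (lt_irrefl r)
  · by_contra hcon
    push_neg at hcon
    have hIVT := intermediate_value_Icc hs.1 (hf.mono (Icc_subset_Icc huIcc.1 hsαβ.2))
    have hmem : 2 * r ∈ Icc (f u) (f s) := ⟨by rw [hfu]; linarith, hcon.le⟩
    obtain ⟨s', hs', hfs'⟩ := hIVT hmem
    have hs'A : s' ∈ A := ⟨⟨le_trans huIcc.1 hs'.1, le_trans hs'.2 hsαβ.2⟩, hfs'⟩
    have : v ≤ s' := csInf_le hAcompact.bddBelow hs'A
    have hsv : s = v := le_antisymm hs.2 (le_trans this hs'.2)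
    rw [hsv, hfv] at hcon
    exact absurd hcon (lt_irrefl _)

/-- Reduction modulo `ℤ²`. -/
theorem reduce_mod_lattice (V : E2 → ℝ) (hper : ZPer V) (z : E2) :
    ∃ w : E2, ‖w‖ ≤ 2 ∧ V w = V z ∧
      ∀ q : ℤ × ℤ, ∃ q' : ℤ × ℤ, dist w (pt q.1 q.2) = dist z (pt q'.1 q'.2) := by
  set k1 : ℤ := ⌊z 0⌋
  set k2 : ℤ := ⌊z 1⌋
  refine ⟨z - pt k1 k2, ?_, ?_, ?_⟩
  · have h0 : (z - pt (k1 : ℝ) k2) 0 = Int.fract (z 0) := rfl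
    have h1 : (z - pt (k1 : ℝ) k2) 1 = Int.fract (z 1) := rfl
    rw [E2_norm_eq, h0, h1]
    have f0 := Int.fract_nonneg (z 0); have f0' := Int.fract_lt_one (z 0)
    have f1 := Int.fract_nonneg (z 1); have f1' := Int.fract_lt_one (z 1)
    rw [show (2 : ℝ) = Real.sqrt 4 by
      rw [show (4:ℝ) = 2^2 by norm_num, Real.sqrt_sq (by norm_num)]]
    apply Real.sqrt_le_sqrt
    nlinarith
  · have : z - pt (k1 : ℝ) k2 + pt k1 k2 = z := sub_add_cancel z _
    have := hper (z - pt (k1 : ℝ) k2) (k1, k2)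
    rw [sub_add_cancel] at this
    exact this.symm
  · intro q
    refine ⟨(q.1 + k1, q.2 + k2), ?_⟩
    rw [dist_eq_norm, dist_eq_norm]
    congr 1
    have : pt ((q.1 : ℝ)) (q.2 : ℝ) + pt (k1 : ℝ) (k2 : ℝ) = pt ((q.1 : ℝ) + k1) ((q.2 : ℝ) + k2) :=
      pt_add _ _ _ _
    push_cast
    rw [← this]
    abel

/-- A global bound for `-V`. -/
theorem global_bound (V : E2 → ℝ) (hcont : Continuous V) (hper : ZPer V) :
    ∃ C₀ : ℝ, ∀ z : E2, -V z ≤ C₀ := by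
  obtain ⟨z₀, hz₀, hmax⟩ := (isCompact_closedBall (0 : E2) 2).exists_isMaxOn
    ⟨0, by simp⟩ (hcont.neg.continuousOn)
  refine ⟨-V z₀, fun z => ?_⟩
  obtain ⟨w, hw2, hwV, _⟩ := reduce_mod_lattice V hper z
  rw [← hwV]
  exact hmax (by simpa [Metric.mem_closedBall, dist_eq_norm] using hw2)

/-- A positive lower bound for `-V` away from the lattice. -/
theorem well_bound (V : E2 → ℝ) (hcont : Continuous V) (hper : ZPer V)
    (hnonpos : ∀ x, V x ≤ 0) (hzero : ∀ x : E2, V x = 0 ↔ ∃ k : ℤ × ℤ, x = pt k.1 k.2)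
    {r : ℝ} (hr : 0 < r) (hr4 : r ≤ 1 / 4) :
    ∃ c : ℝ, 0 < c ∧ ∀ z : E2, (∀ q : ℤ × ℤ, r ≤ dist z (pt q.1 q.2)) → c ≤ -V z := by
  set T : Set E2 := Metric.closedBall 0 2 ∩ {z | ∀ q : ℤ × ℤ, r ≤ dist z (pt q.1 q.2)} with hT
  have hTclosed : IsClosed T := by
    apply Metric.isClosed_closedBall.inter
    have : {z : E2 | ∀ q : ℤ × ℤ, r ≤ dist z (pt q.1 q.2)}
        = ⋂ q : ℤ × ℤ, {z | r ≤ dist z (pt q.1 q.2)} := by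
      ext z; simp [Set.mem_iInter]
    rw [this]
    exact isClosed_iInter fun q =>
      isClosed_le continuous_const (continuous_id.dist continuous_const)
  have hTcompact : IsCompact T :=
    (isCompact_closedBall (0 : E2) 2).of_isClosed_subset hTclosed inter_subset_left
  have hTne : T.Nonempty := by
    refine ⟨pt (1/2) (1/2), ?_, ?_⟩
    · rw [Metric.mem_closedBall, dist_zero_right, E2_norm_eq]
      have h0 : pt ((1:ℝ)/2) (1/2) 0 = 1/2 := rfl
      have h1 : pt ((1:ℝ)/2) (1/2) 1 = 1/2 := rfl
      rw [h0, h1]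
      rw [show (2 : ℝ) = Real.sqrt 4 by
        rw [show (4:ℝ) = 2^2 by norm_num, Real.sqrt_sq (by norm_num)]]
      apply Real.sqrt_le_sqrt; norm_num
    · intro q
      have hcoord : (pt ((1:ℝ)/2) (1/2) - pt q.1 q.2) 0 = 1/2 - q.1 := rfl
      have habs : (1:ℝ)/2 ≤ |1/2 - (q.1 : ℝ)| := by
        rcases le_or_gt q.1 0 with hq | hq
        · have : (q.1 : ℝ) ≤ 0 := by exact_mod_cast hq
          rw [le_abs]; left; linarith
        · have : (1 : ℝ) ≤ q.1 := by exact_mod_cast hq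
          rw [le_abs]; right; linarith
      have := coord_le_norm (pt (1/2) (1/2) - pt q.1 q.2) 0
      rw [hcoord] at this
      rw [dist_eq_norm]
      linarith
  obtain ⟨z₀, hz₀T, hmin⟩ := hTcompact.exists_isMaxOn hTne hcont.continuousOn
  have hVz₀ : V z₀ < 0 := by
    rcases lt_or_eq_of_le (hnonpos z₀) with h | h
    · exact h
    · exfalso
      obtain ⟨k, hk⟩ := (hzero z₀).1 h
      have := hz₀T.2 k
      rw [hk] at this
      simp at this
      linarith
  refine ⟨-V z₀, by linarith, fun z hz => ?_⟩
  obtain ⟨w, hw2, hwV, hwq⟩ := reduce_mod_lattice V hper z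
  have hwT : w ∈ T := by
    refine ⟨by simpa [Metric.mem_closedBall, dist_eq_norm] using hw2, fun q => ?_⟩
    obtain ⟨q', hq'⟩ := hwq q
    rw [hq']
    exact hz q'
  have h2 : V w ≤ V z₀ := hmin hwT
  rw [← hwV]
  linarith

set_option maxHeartbeats 1000000 in
theorem action_lower_bound (V : E2 → ℝ) (hVcont : Continuous V) (hnonpos : ∀ x, V x ≤ 0)
    {c C₀ r : ℝ} (hc : 0 < c) (hC₀ : ∀ z, -V z ≤ C₀)
    (hS : ∀ z : E2, (∀ q : ℤ × ℤ, r ≤ dist z (pt q.1 q.2)) → c ≤ -V z)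
    (hr : 0 < r) (hr4 : r ≤ 1 / 4)
    {t : ℝ} (ht : 0 ≤ t) {η : ℝ → E2} {K : NNReal} (hK : LipschitzOnWith K η (Set.Icc 0 t))
    {δ : ℝ} (hδ : 0 < δ) (h4r : 4 * r ≤ δ) (hdisp : δ ≤ ‖η 0 - η t‖) :
    Real.sqrt (2 * c) * r ≤ actInt V 0 t η := by
  have hcont : ContinuousOn η (Icc 0 t) := hK.continuousOn
  -- extend η to a globally Lipschitz curve η̃ with constant Kr = 2K
  have hcoord : ∀ i : Fin 2, LipschitzOnWith K (fun s => η s i) (Icc 0 t) := by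
    intro i
    rw [lipschitzOnWith_iff_dist_le_mul] at hK ⊢
    intro x hx y hy
    calc dist (η x i) (η y i) = |(η x - η y) i| := by
          rw [Real.dist_eq]; rfl
      _ ≤ ‖η x - η y‖ := coord_le_norm _ i
      _ = dist (η x) (η y) := (dist_eq_norm _ _).symm
      _ ≤ K * dist x y := hK x hx y hy
  obtain ⟨g0, hg0lip, hg0eq⟩ := (hcoord 0).extend_real
  obtain ⟨g1, hg1lip, hg1eq⟩ := (hcoord 1).extend_real
  set Kr : NNReal := 2 * K with hKr
  set ηe : ℝ → E2 := fun s => pt (g0 s) (g1 s) with hηe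
  have hηelip : LipschitzWith Kr ηe := by
    apply LipschitzWith.of_dist_le_mul
    intro s s'
    have h0 : |g0 s - g0 s'| ≤ K * dist s s' := by
      have := hg0lip.dist_le_mul s s'; rwa [Real.dist_eq] at this
    have h1 : |g1 s - g1 s'| ≤ K * dist s s' := by
      have := hg1lip.dist_le_mul s s'; rwa [Real.dist_eq] at this
    have hc0 : (ηe s - ηe s') 0 = g0 s - g0 s' := rfl
    have hc1 : (ηe s - ηe s') 1 = g1 s - g1 s' := rfl
    rw [dist_eq_norm, E2_norm_eq, hc0, hc1]
    have hKd : (0:ℝ) ≤ (K : ℝ) * dist s s' := by positivity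
    have hcoe : ((Kr : NNReal) : ℝ) = 2 * (K : ℝ) := by rw [hKr]; push_cast; ring
    rw [hcoe]
    have : (g0 s - g0 s') ^ 2 + (g1 s - g1 s') ^ 2 ≤ (2 * (K:ℝ) * dist s s') ^ 2 := by
      nlinarith [sq_abs (g0 s - g0 s'), sq_abs (g1 s - g1 s'),
        abs_nonneg (g0 s - g0 s'), abs_nonneg (g1 s - g1 s')]
    calc Real.sqrt ((g0 s - g0 s') ^ 2 + (g1 s - g1 s') ^ 2)
        ≤ Real.sqrt ((2 * (K:ℝ) * dist s s') ^ 2) := Real.sqrt_le_sqrt this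
      _ = 2 * (K:ℝ) * dist s s' := Real.sqrt_sq (by positivity)
      _ = 2 * (K:ℝ) * dist s s' := rfl
  have hEq : Set.EqOn η ηe (Icc 0 t) := by
    intro s hs
    ext i
    fin_cases i
    · exact hg0eq hs
    · exact hg1eq hs
  have hderiv_eq : ∀ s ∈ Ioo 0 t, deriv η s = deriv ηe s := by
    intro s hs
    have hnb : Icc 0 t ∈ 𝓝 s := Icc_mem_nhds hs.1 hs.2
    exact (Filter.eventuallyEq_of_mem hnb hEq).deriv_eq
  -- the crossing interval
  obtain ⟨u, v, hu0, huv, hvt, hin, hdisp2⟩ :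
      ∃ u v, 0 ≤ u ∧ u ≤ v ∧ v ≤ t ∧
        (∀ s ∈ Icc u v, ∀ q : ℤ × ℤ, r ≤ dist (η s) (pt q.1 q.2)) ∧
        r ≤ ‖η v - η u‖ := by
    by_cases hall : ∀ s ∈ Icc 0 t, ∀ q : ℤ × ℤ, r ≤ dist (η s) (pt q.1 q.2)
    · refine ⟨0, t, le_rfl, ht, le_rfl, fun s hs => hall s hs, ?_⟩
      rw [norm_sub_rev]
      linarith
    · push_neg at hall
      obtain ⟨s₁, hs₁, q, hq⟩ := hall
      set p : E2 := pt q.1 q.2 with hp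
      have hdq : ∀ {w : E2}, dist w p ≤ 2 * r → ∀ q' : ℤ × ℤ, q' ≠ q →
          r ≤ dist w (pt q'.1 q'.2) := by
        intro w hw q' hq'
        have h1 : (1:ℝ) ≤ dist p (pt q'.1 q'.2) := by
          rw [dist_comm]; exact lattice_dist hq'
        have := dist_triangle p w (pt q'.1 q'.2)
        rw [dist_comm p w] at this
        linarith
      have hfar : 2 * r ≤ dist (η t) p ∨ 2 * r ≤ dist (η 0) p := by
        by_contra hcon
        push_neg at hcon
        have := dist_triangle (η 0) p (η t)
        rw [dist_comm p (η t)] at this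
        have hd : dist (η 0) (η t) = ‖η 0 - η t‖ := dist_eq_norm _ _
        linarith [hcon.1, hcon.2]
      rcases hfar with hfar | hfar
      · -- cross on [s₁, t]
        have hsub : Icc s₁ t ⊆ Icc 0 t := Icc_subset_Icc hs₁.1 le_rfl
        obtain ⟨u, v, hu1, huv, hvt, hin, hfu, hfv⟩ :=
          crossing (f := fun s => dist (η s) p) hs₁.2
            ((continuous_id.dist continuous_const).comp_continuousOn (hcont.mono hsub)) hq hfar hr
        refine ⟨u, v, le_trans hs₁.1 hu1, huv, hvt, ?_, ?_⟩
        · intro s hs q'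
          have hsIcc : s ∈ Icc u v := hs
          have := hin s hsIcc
          by_cases hq' : q' = q
          · rw [hq']; exact this.1
          · exact hdq this.2 q' hq'
        · have habs := abs_dist_sub_le (η v) (η u) p
          rw [hfu, hfv] at habs
          have : |2 * r - r| = r := by rw [abs_of_nonneg (by linarith)]; ring
          rw [this] at habs
          rw [← dist_eq_norm]
          exact habs
      · -- cross on [0, s₁], reversed
        have hmaps : Set.MapsTo (fun s : ℝ => -s) (Icc (-s₁) 0) (Icc 0 t) := by
          intro s hs
          simp only [Set.mem_Icc] at hs ⊢
          constructor <;> linarith [hs₁.1, hs₁.2, hs.1, hs.2]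
        have hcont' : ContinuousOn (fun s => dist (η (-s)) p) (Icc (-s₁) 0) :=
          ((continuous_id.dist continuous_const).comp_continuousOn (hcont.comp continuous_neg.continuousOn hmaps))
        obtain ⟨u', v', hu1, huv, hvt, hin, hfu, hfv⟩ :=
          crossing (f := fun s => dist (η (-s)) p) (by linarith [hs₁.1])
            hcont' (by simpa using hq) (by simpa using hfar) hr
        refine ⟨-v', -u', by linarith, by linarith, by linarith [hs₁.2], ?_, ?_⟩
        · intro s hs q'
          have hsmem : -s ∈ Icc u' v' := ⟨by linarith [hs.2], by linarith [hs.1]⟩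
          have := hin (-s) hsmem
          rw [neg_neg] at this
          by_cases hq' : q' = q
          · rw [hq']; exact this.1
          · exact hdq this.2 q' hq'
        · have habs := abs_dist_sub_le (η (-u')) (η (-v')) p
          rw [hfu, hfv] at habs
          have : |r - 2 * r| = r := by rw [abs_of_nonpos (by linarith)]; ring
          rw [this] at habs
          rw [← dist_eq_norm]
          exact habs
  -- the integral estimate
  set M := Real.sqrt (2 * c) with hM
  have hM0 : 0 ≤ M := Real.sqrt_nonneg _
  have hM2 : M ^ 2 = 2 * c := Real.sq_sqrt (by linarith)
  set L : ℝ → ℝ := fun s => (1 / 2) * ‖deriv η s‖ ^ 2 - V (η s) with hL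
  have hC₀0 : 0 ≤ C₀ := by
    have h1 : (0:ℝ) ≤ -V 0 := by linarith [hnonpos 0]
    linarith [hC₀ 0]
  have hae_glob : ∀ᵐ s : ℝ, s ≠ 0 ∧ s ≠ t := by
    have h1 : ({s : ℝ | ¬ (s ≠ 0 ∧ s ≠ t)} : Set ℝ) ⊆ {0} ∪ {t} := by
      intro s hs
      simp only [Set.mem_setOf_eq, not_and_or, not_not] at hs
      rcases hs with h | h
      · exact Or.inl h
      · exact Or.inr h
    rw [ae_iff]
    exact measure_mono_null h1 (measure_union_null (measure_singleton 0) (measure_singleton t))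
  have haeIoo : ∀ᵐ s ∂(volume.restrict (Icc (0:ℝ) t)), s ∈ Ioo 0 t := by
    filter_upwards [ae_restrict_of_ae hae_glob, ae_restrict_mem measurableSet_Icc]
      with s hne hmem
    exact ⟨lt_of_le_of_ne hmem.1 (Ne.symm hne.1), lt_of_le_of_ne hmem.2 hne.2⟩
  have hKb : ∀ s ∈ Ioo (0:ℝ) t, ‖deriv η s‖ ≤ (Kr : ℝ) := by
    intro s hs
    rw [hderiv_eq s hs]
    exact lip_norm_deriv_le hηelip s
  have hmeas1 : Measurable fun s => ‖deriv η s‖ := (measurable_deriv η).norm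
  have hmeasV : AEMeasurable (fun s => V (η s)) (volume.restrict (Icc (0:ℝ) t)) :=
    (hVcont.comp_continuousOn hcont).aemeasurable measurableSet_Icc
  have hmeasL : AEStronglyMeasurable L (volume.restrict (Icc (0:ℝ) t)) :=
    ((((hmeas1.pow_const 2).const_mul (1/2)).aemeasurable.sub hmeasV)).aestronglyMeasurable
  have hintL : IntegrableOn L (Icc 0 t) := by
    apply Integrable.mono'
      ((integrableOn_const_iff (C := (1/2) * (Kr:ℝ)^2 + C₀)).2 (Or.inr measure_Icc_lt_top)) hmeasL
    filter_upwards [haeIoo] with s hs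
    have h1 := hKb s hs
    have h2 := hC₀ (η s)
    have h3 := hnonpos (η s)
    have h4 : 0 ≤ ‖deriv η s‖ := norm_nonneg _
    rw [hL, Real.norm_eq_abs, abs_of_nonneg (by nlinarith)]
    nlinarith
  set g : ℝ → ℝ := (Icc u v).indicator (fun s => M * ‖deriv η s‖) with hg
  have hsubuv : Icc u v ⊆ Icc 0 t := Icc_subset_Icc hu0 hvt
  have hmeasg : AEStronglyMeasurable g (volume.restrict (Icc (0:ℝ) t)) :=
    ((hmeas1.const_mul M).indicator measurableSet_Icc).aestronglyMeasurable.restrict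
  have hintg : IntegrableOn g (Icc 0 t) := by
    apply Integrable.mono'
      ((integrableOn_const_iff (C := M * (Kr:ℝ))).2 (Or.inr measure_Icc_lt_top)) hmeasg
    filter_upwards [haeIoo] with s hs
    rw [Real.norm_eq_abs]
    by_cases hsuv : s ∈ Icc u v
    · rw [hg, Set.indicator_of_mem hsuv]
      rw [abs_of_nonneg (by positivity)]
      exact mul_le_mul_of_nonneg_left (hKb s hs) hM0
    · rw [hg, Set.indicator_of_notMem hsuv]
      simp only [abs_zero]
      positivity
  have hle : g ≤ᵐ[volume.restrict (Icc (0:ℝ) t)] L := by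
    filter_upwards [haeIoo] with s hs
    by_cases hsuv : s ∈ Icc u v
    · rw [hg, Set.indicator_of_mem hsuv, hL]
      have hcle : c ≤ -V (η s) := hS (η s) (hin s hsuv)
      nlinarith [sq_nonneg (‖deriv η s‖ - M)]
    · rw [hg, Set.indicator_of_notMem hsuv, hL]
      have := hnonpos (η s)
      nlinarith [sq_nonneg (‖deriv η s‖)]
  have hstep1 : ∫ s in Icc (0:ℝ) t, g s ≤ ∫ s in Icc (0:ℝ) t, L s :=
    integral_mono_ae hintg hintL hle
  have hstep2 : ∫ s in Icc (0:ℝ) t, g s = ∫ s in Icc u v, M * ‖deriv η s‖ := by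
    rw [hg, integral_indicator measurableSet_Icc,
      Measure.restrict_restrict measurableSet_Icc, Set.inter_eq_self_of_subset_left hsubuv]
  have hstep3 : ∫ s in Icc u v, M * ‖deriv η s‖ = ∫ s in Icc u v, M * ‖deriv ηe s‖ := by
    apply setIntegral_congr_ae measurableSet_Icc
    filter_upwards [hae_glob] with s hne hsuv
    have hsIoo : s ∈ Ioo 0 t :=
      ⟨lt_of_le_of_ne (hsubuv hsuv).1 (Ne.symm hne.1), lt_of_le_of_ne (hsubuv hsuv).2 hne.2⟩
    rw [hderiv_eq s hsIoo]
  have hstep4 : ∫ s in Icc u v, M * ‖deriv ηe s‖ = M * ∫ s in u..v, ‖deriv ηe s‖ := by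
    rw [integral_Icc_eq_integral_Ioc, ← intervalIntegral.integral_of_le huv,
      intervalIntegral.integral_const_mul]
  have huIcc : u ∈ Icc 0 t := ⟨hu0, le_trans huv hvt⟩
  have hvIcc : v ∈ Icc 0 t := ⟨le_trans hu0 huv, hvt⟩
  have hstep5 : r ≤ ∫ s in u..v, ‖deriv ηe s‖ := by
    have hd := lipschitz_displacement hηelip huv
    have heq : ηe v - ηe u = η v - η u := by rw [← hEq huIcc, ← hEq hvIcc]
    rw [heq] at hd
    linarith [hdisp2]
  have hconv : actInt V 0 t η = ∫ s in Icc (0:ℝ) t, L s := by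
    rw [actInt, intervalIntegral.integral_of_le ht, ← integral_Icc_eq_integral_Ioc]
  calc M * r ≤ M * ∫ s in u..v, ‖deriv ηe s‖ := mul_le_mul_of_nonneg_left hstep5 hM0
    _ = ∫ s in Icc u v, M * ‖deriv ηe s‖ := hstep4.symm
    _ = ∫ s in Icc (0:ℝ) t, g s := by rw [hstep2, hstep3]
    _ ≤ ∫ s in Icc (0:ℝ) t, L s := hstep1
    _ = actInt V 0 t η := hconv.symm

end Aux

/-- Under Assumption (M), for every `δ > 0` the infimum of `h(x,y)`
over all `x, y` with `|x − y| ≥ δ` is strictly positive. -/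
theorem statement_1 (V : E2 → ℝ) (a b : ℝ) (hM : AssumptionM V a b) (δ : ℝ) (hδ : 0 < δ) :
    0 < sInf {A : ℝ | ∃ x y : E2, δ ≤ ‖x - y‖ ∧ A = hmin V x y} := by
  have hVcont : Continuous V := hM.smooth.continuous
  set r : ℝ := min δ 1 / 4 with hrdef
  have hmin01 : 0 < min δ 1 := lt_min hδ one_pos
  have hr : 0 < r := by rw [hrdef]; linarith
  have hr4 : r ≤ 1 / 4 := by
    have := min_le_right δ 1
    rw [hrdef]; linarith
  have h4r : 4 * r ≤ δ := by
    have := min_le_left δ 1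
    rw [hrdef]; linarith
  obtain ⟨c, hc, hS⟩ := well_bound V hVcont hM.periodic hM.nonpos hM.zeroSet hr hr4
  obtain ⟨C₀, hC₀⟩ := global_bound V hVcont hM.periodic
  have hMpos : 0 < Real.sqrt (2 * c) * r :=
    mul_pos (Real.sqrt_pos.2 (by linarith)) hr
  have key : ∀ x y : E2, δ ≤ ‖x - y‖ → Real.sqrt (2 * c) * r ≤ hmin V x y := by
    intro x y hxy
    apply le_csInf
    · -- the set of actions is nonempty : straight-line curve
      refine ⟨actInt V 0 1 (fun s => x + s • (y - x)), 1, by norm_num,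
        fun s => x + s • (y - x), ⟨‖y - x‖₊, ?_⟩, ?_, ?_, rfl⟩
      · apply LipschitzWith.lipschitzOnWith
        apply LipschitzWith.of_dist_le_mul
        intro s s'
        rw [dist_eq_norm, dist_eq_norm]
        have hsub : (x + s • (y - x)) - (x + s' • (y - x)) = (s - s') • (y - x) := by
          rw [add_sub_add_left_eq_sub, ← sub_smul]
        rw [hsub, norm_smul]
        simp [Real.dist_eq, mul_comm]
      · simp
      · simp
    · rintro B ⟨t, ht, η, ⟨K, hK⟩, hx0, hxt, rfl⟩
      have hdisp : δ ≤ ‖η 0 - η t‖ := by rw [hx0, hxt]; exact hxy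
      exact action_lower_bound V hVcont hM.nonpos hc hC₀ hS hr hr4 ht hK hδ h4r hdisp
  apply lt_of_lt_of_le hMpos
  apply le_csInf
  · refine ⟨hmin V (pt δ 0) 0, pt δ 0, 0, ?_, rfl⟩
    have hn : ‖pt δ 0 - 0‖ = δ := by
      rw [sub_zero, E2_norm_eq]
      have h0 : pt δ 0 0 = δ := rfl
      have h1 : pt δ 0 1 = (0:ℝ) := rfl
      rw [h0, h1]
      rw [show δ ^ 2 + (0:ℝ) ^ 2 = δ ^ 2 by ring, Real.sqrt_sq hδ.le]
    rw [hn]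
  · rintro A ⟨x, y, hxy, rfl⟩
    exact key x y hxy
end
end

section
/- Assume Assumption (M), let p ∈ ℝ², let v be a subsolution of the cell problem at level 0 for p, and let ξ : ℝ → ℝ² be an ECCUS associated with (p, v). Then: (I) ξ is one-to-one; and for all s₁ < s₂ < s₃, h(ξ(s₁), ξ(s₃)) = h(ξ(s₁), ξ(s₂)) + h(ξ(s₂), ξ(s₃)). -/
noncomputable section

open MeasureTheory Filter Topology Real
open scoped RealInnerProductSpace

/-- A (Lipschitz, `ℤ²`-periodic) subsolution of the cell problem at level `c` for `p`. -/
def IsSubsolution (V : E2 → ℝ) (p : E2) (c : ℝ) (v : E2 → ℝ) : Prop :=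
  ZPer v ∧ (∃ K : NNReal, LipschitzWith K v) ∧
  ∀ᵐ x ∂(volume : Measure E2),
    DifferentiableAt ℝ v x ∧ (1 / 2) * ‖p + gradient v x‖ ^ 2 + V x ≤ c

/-- An extended calibrated curve with unit speed (ECCUS) associated with `(p, v)`:
a Lipschitz curve with `|ξ̇| = 1` a.e. such that `u(ξ(s₂)) − u(ξ(s₁)) = h(ξ(s₁), ξ(s₂))`
for all `s₁ < s₂`, where `u = p·x + v`. -/
def IsECCUS (V : E2 → ℝ) (p : E2) (v : E2 → ℝ) (ξ : ℝ → E2) : Prop :=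
  (∃ K : NNReal, LipschitzWith K ξ) ∧
  (∀ᵐ s ∂(volume : Measure ℝ), ‖deriv ξ s‖ = 1) ∧
  ∀ s₁ s₂ : ℝ, s₁ < s₂ →
    (⟪p, ξ s₂⟫ + v (ξ s₂)) - (⟪p, ξ s₁⟫ + v (ξ s₁)) = hmin V (ξ s₁) (ξ s₂)

/-- FTC for globally Lipschitz real functions. -/
lemma lip_integral_deriv {f : ℝ → ℝ} {K : NNReal} (hf : LipschitzWith K f)
    {a b : ℝ} (hab : a ≤ b) : ∫ s in a..b, deriv f s = f b - f a := by
  have hcont : Continuous f := hf.continuous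
  set u : ℕ → ℝ := fun n => (n + 1 : ℝ)⁻¹ with hu
  have hu_pos : ∀ n, 0 < u n := fun n => by positivity
  have hu_lim : Tendsto u atTop (𝓝 0) :=
    tendsto_one_div_add_atTop_nhds_zero_nat.congr (by intro n; simp [hu, one_div])
  set F : ℕ → ℝ → ℝ := fun n s => (f (s + u n) - f s) / u n with hF
  have hInt : ∀ c d : ℝ, IntervalIntegrable f volume c d := fun c d =>
    hcont.intervalIntegrable c d
  -- Step 1: integral identity
  have step1 : ∀ n, ∫ s in a..b, F n s =
      (∫ s in b..(b + u n), f s) / u n - (∫ s in a..(a + u n), f s) / u n := by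
    intro n
    have hInt' : IntervalIntegrable (fun s => f (s + u n)) volume a b := by
      exact (hcont.comp (continuous_add_right (u n))).intervalIntegrable a b
    have h1 : (∫ s in a..b, f (s + u n)) = ∫ s in (a + u n)..(b + u n), f s :=
      intervalIntegral.integral_comp_add_right f (u n)
    have h2 : (∫ s in a..(a + u n), f s) + (∫ s in (a + u n)..(b + u n), f s)
        = ∫ s in a..(b + u n), f s :=
      intervalIntegral.integral_add_adjacent_intervals (hInt _ _) (hInt _ _)
    have h3 : (∫ s in a..b, f s) + (∫ s in b..(b + u n), f s)
        = ∫ s in a..(b + u n), f s :=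
      intervalIntegral.integral_add_adjacent_intervals (hInt _ _) (hInt _ _)
    have h4 : (∫ s in a..b, F n s)
        = ((∫ s in a..b, f (s + u n)) - ∫ s in a..b, f s) / u n := by
      rw [← intervalIntegral.integral_sub hInt' (hInt a b), intervalIntegral.integral_div]
    rw [h4, h1]
    have := hu_pos n
    field_simp
    linarith
  -- Step 2: endpoint averages converge
  have step2 : ∀ c : ℝ, Tendsto (fun n => (∫ s in c..(c + u n), f s) / u n) atTop (𝓝 (f c)) := by
    intro c
    have key : ∀ n, |(∫ s in c..(c + u n), f s) / u n - f c| ≤ K * u n := by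
      intro n
      have hun := hu_pos n
      have h0 : (∫ s in c..(c + u n), f s) / u n - f c
          = (∫ s in c..(c + u n), (f s - f c)) / u n := by
        rw [intervalIntegral.integral_sub (hInt _ _) intervalIntegrable_const,
          intervalIntegral.integral_const]
        field_simp
        simp only [add_sub_cancel_left, smul_eq_mul]
      have hb : |∫ s in c..(c + u n), (f s - f c)| ≤ (K * u n) * |(c + u n) - c| := by
        rw [← Real.norm_eq_abs]
        apply intervalIntegral.norm_integral_le_of_norm_le_const
        intro x hx
        rw [Real.norm_eq_abs]
        rw [Set.uIoc_of_le (by linarith)] at hx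
        have : |f x - f c| ≤ K * |x - c| := by
          simpa [Real.dist_eq] using hf.dist_le_mul x c
        refine le_trans this ?_
        have : |x - c| ≤ u n := by
          rw [abs_of_nonneg (by linarith [hx.1.le])]
          linarith [hx.2]
        nlinarith [K.coe_nonneg]
      rw [h0, abs_div, abs_of_pos hun, div_le_iff₀ hun]
      calc |∫ s in c..(c + u n), (f s - f c)| ≤ (K * u n) * |(c + u n) - c| := hb
        _ = K * u n * u n := by rw [abs_of_pos (by linarith)]; ring
    have h0 : Tendsto (fun n => (∫ s in c..(c + u n), f s) / u n - f c) atTop (𝓝 0) := by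
      apply squeeze_zero_norm key
      simpa using hu_lim.const_mul (K : ℝ)
    simpa using h0.add_const (f c)
  -- Step 3: dominated convergence
  have step3 : Tendsto (fun n => ∫ s in a..b, F n s) atTop (𝓝 (∫ s in a..b, deriv f s)) := by
    apply intervalIntegral.tendsto_integral_filter_of_dominated_convergence (fun _ => (K : ℝ))
    · filter_upwards with n
      exact (((hcont.comp (continuous_add_right (u n))).sub hcont).div_const _).aestronglyMeasurable
    · filter_upwards with n
      filter_upwards with x _
      have hun := hu_pos n
      rw [hF]
      rw [Real.norm_eq_abs, abs_div, abs_of_pos hun, div_le_iff₀ hun]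
      have : |f (x + u n) - f x| ≤ K * |x + u n - x| := by
        simpa [Real.dist_eq] using hf.dist_le_mul (x + u n) x
      simpa [abs_of_pos hun] using this
    · exact intervalIntegrable_const
    · have hae : ∀ᵐ x : ℝ, DifferentiableAt ℝ f x := hf.ae_differentiableAt
      filter_upwards [hae] with x hx _
      have hslope : Tendsto (slope f x) (𝓝[≠] x) (𝓝 (deriv f x)) :=
        hasDerivAt_iff_tendsto_slope.1 hx.hasDerivAt
      have hxu : Tendsto (fun n => x + u n) atTop (𝓝[≠] x) := by
        apply tendsto_nhdsWithin_of_tendsto_nhds_of_eventually_within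
        · simpa using (tendsto_const_nhds.add hu_lim)
        · filter_upwards with n
          simp only [Set.mem_compl_iff, Set.mem_singleton_iff]
          intro h
          have := hu_pos n
          nlinarith [congrArg (fun y => y - x) h]
      have := hslope.comp hxu
      apply this.congr
      intro n
      simp only [Function.comp_apply, hF, slope, vsub_eq_sub, add_sub_cancel_left,
        div_eq_inv_mul, smul_eq_mul]
  -- Combine
  have step4 : Tendsto (fun n => ∫ s in a..b, F n s) atTop (𝓝 (f b - f a)) := by
    have := (step2 b).sub (step2 a)
    apply this.congr
    intro n
    exact (step1 n).symm
  exact tendsto_nhds_unique step3 step4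

/-- The clamp map to `[a,b]` is `1`-Lipschitz. -/
lemma lipschitz_clamp (a b : ℝ) : LipschitzWith 1 (fun s : ℝ => max a (min b s)) := by
  apply LipschitzWith.of_dist_le_mul
  intro x y
  rw [NNReal.coe_one, one_mul, Real.dist_eq, Real.dist_eq]
  calc |max a (min b x) - max a (min b y)| = |max (min b x) a - max (min b y) a| := by
        rw [max_comm a, max_comm a]
    _ ≤ |min b x - min b y| := abs_max_sub_max_le_abs _ _ _
    _ ≤ max |b - b| |x - y| := abs_min_sub_min_le_max _ _ _ _
    _ = |x - y| := by simp

/-- FTC for functions Lipschitz on `[a,b]`. -/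
lemma lipOn_integral_deriv {f : ℝ → ℝ} {K : NNReal} {a b : ℝ} (hab : a ≤ b)
    (hf : LipschitzOnWith K f (Set.Icc a b)) : ∫ s in a..b, deriv f s = f b - f a := by
  set cl : ℝ → ℝ := fun s => max a (min b s) with hcl
  have hclmem : ∀ s, cl s ∈ Set.Icc a b := by
    intro s
    constructor
    · exact le_max_left _ _
    · simp only [hcl, max_le_iff]
      exact ⟨hab, min_le_left _ _⟩
  have hclid : ∀ s ∈ Set.Icc a b, cl s = s := by
    intro s hs
    simp only [hcl, min_eq_right hs.2, max_eq_right hs.1]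
  set G : ℝ → ℝ := fun s => f (cl s) with hG
  have hGlip : LipschitzWith (K * 1) G := by
    have h := hf.comp ((lipschitz_clamp a b).lipschitzOnWith (s := Set.univ))
      (fun s _ => hclmem s)
    rwa [lipschitzOnWith_univ] at h
  have hftc : ∫ s in a..b, deriv G s = G b - G a := lip_integral_deriv hGlip hab
  have hGb : G b = f b := by rw [hG]; simp only; rw [hclid b ⟨hab, le_rfl⟩]
  have hGa : G a = f a := by rw [hG]; simp only; rw [hclid a ⟨le_rfl, hab⟩]
  have hcongr : ∫ s in a..b, deriv f s = ∫ s in a..b, deriv G s := by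
    apply intervalIntegral.integral_congr_ae
    have hb : ∀ᵐ x : ℝ, x ≠ b := by
      rw [ae_iff]
      simpa using measure_singleton b
    filter_upwards [hb] with x hxb hx
    rw [Set.uIoc_of_le hab] at hx
    have hxIoo : x ∈ Set.Ioo a b := ⟨hx.1, lt_of_le_of_ne hx.2 hxb⟩
    have heq : f =ᶠ[nhds x] G := by
      filter_upwards [Icc_mem_nhds hxIoo.1 hxIoo.2] with y hy
      rw [hG]
      simp only
      rw [hclid y hy]
    exact heq.deriv_eq
  rw [hcongr, hftc, hGb, hGa]

/-- If `w` is `1`-Lipschitz and `η` is differentiable at `s`,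
then `|deriv (w ∘ η) s| ≤ ‖deriv η s‖`. -/
lemma abs_deriv_comp_le {E : Type*} [NormedAddCommGroup E] [NormedSpace ℝ E]
    {w : E → ℝ} (hw : LipschitzWith 1 w) {η : ℝ → E} {s : ℝ}
    (hη : DifferentiableAt ℝ η s) : |deriv (fun y => w (η y)) s| ≤ ‖deriv η s‖ := by
  set g : ℝ → ℝ := fun y => w (η y) with hg
  by_cases hgd : DifferentiableAt ℝ g s
  · have h1 : Tendsto (fun y => |slope g s y|) (𝓝[≠] s) (𝓝 |deriv g s|) := by
      simpa [Real.norm_eq_abs] using (hasDerivAt_iff_tendsto_slope.1 hgd.hasDerivAt).norm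
    have h2 : Tendsto (fun y => ‖slope η s y‖) (𝓝[≠] s) (𝓝 ‖deriv η s‖) :=
      (hasDerivAt_iff_tendsto_slope.1 hη.hasDerivAt).norm
    refine le_of_tendsto_of_tendsto' h1 h2 ?_
    intro y
    rw [slope, slope, vsub_eq_sub, vsub_eq_sub, smul_eq_mul, abs_mul, norm_smul,
      Real.norm_eq_abs]
    have hb : |g y - g s| ≤ ‖η y - η s‖ := by
      simpa [Real.dist_eq, dist_eq_norm] using hw.dist_le_mul (η y) (η s)
    exact mul_le_mul_of_nonneg_left hb (abs_nonneg _)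
  · rw [deriv_zero_of_not_differentiableAt hgd]
    simpa using norm_nonneg (deriv η s)

lemma hmin_nonneg (V : E2 → ℝ) (hV0 : ∀ x, V x ≤ 0) (x y : E2) : 0 ≤ hmin V x y := by
  apply Real.sInf_nonneg
  rintro A ⟨t, ht, η, -, -, -, rfl⟩
  apply intervalIntegral.integral_nonneg ht
  intro s _
  have h1 : (0:ℝ) ≤ ‖deriv η s‖ ^ 2 := by positivity
  have h2 := hV0 (η s)
  linarith

lemma hmin_pos {V : E2 → ℝ} (hVc : Continuous V) (hV0 : ∀ x, V x ≤ 0) {z x : E2}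
    (hVz : V z < 0) (hzx : z ≠ x) : 0 < hmin V z x := by
  -- a ball around `z` where `V ≤ -c`
  set c : ℝ := -V z / 2 with hc
  have hcpos : 0 < c := by rw [hc]; linarith
  obtain ⟨δ, hδpos, hδ⟩ : ∃ δ > 0, ∀ ζ : E2, dist ζ z < δ → V ζ ≤ -c := by
    obtain ⟨δ, hδpos, h⟩ := Metric.continuousAt_iff.1 hVc.continuousAt c hcpos
    refine ⟨δ, hδpos, fun ζ hζ => ?_⟩
    have := (abs_lt.1 (by simpa [Real.dist_eq] using h hζ)).2
    rw [hc]; linarith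
  have hxz : 0 < ‖x - z‖ := by
    rw [norm_pos_iff, sub_ne_zero]; exact fun h => hzx h.symm
  set ρ : ℝ := min (δ / 2) (‖x - z‖ / 2) with hρ
  have hρpos : 0 < ρ := lt_min (by linarith) (by linarith)
  have hball : ∀ ζ : E2, dist ζ z ≤ ρ → V ζ ≤ -c := fun ζ hζ =>
    hδ ζ (lt_of_le_of_lt hζ (lt_of_le_of_lt (min_le_left _ _) (by linarith)))
  have hρx : ρ < ‖x - z‖ := lt_of_le_of_lt (min_le_right _ _) (by linarith)
  -- the 1-Lipschitz truncated distance function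
  set w : E2 → ℝ := fun ζ => min (dist ζ z) ρ with hw
  have hw_lip : LipschitzWith 1 w := by
    apply LipschitzWith.of_dist_le_mul
    intro q q'
    rw [NNReal.coe_one, one_mul, Real.dist_eq]
    calc |min (dist q z) ρ - min (dist q' z) ρ| ≤ max |dist q z - dist q' z| |ρ - ρ| :=
          abs_min_sub_min_le_max _ _ _ _
      _ = |dist q z - dist q' z| := by simp
      _ ≤ dist q q' := abs_dist_sub_le _ _ _
  have hw0 : w z = 0 := by simp [hw, hρpos.le]
  have hwx : w x = ρ := by
    rw [hw]
    simp only
    rw [min_eq_right]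
    rw [dist_eq_norm]
    exact hρx.le
  set m : ℝ := Real.sqrt (2 * c) with hm
  have hmpos : 0 < m := Real.sqrt_pos.2 (by linarith)
  have hm2 : m ^ 2 = 2 * c := Real.sq_sqrt (by linarith)
  have key : ∀ A ∈ {A : ℝ | ∃ t : ℝ, 0 ≤ t ∧ ∃ η : ℝ → E2,
      (∃ K : NNReal, LipschitzOnWith K η (Set.Icc 0 t)) ∧ η 0 = z ∧ η t = x ∧
      A = actInt V 0 t η}, m * ρ ≤ A := by
    rintro A ⟨t, ht, η, ⟨K, hK⟩, hη0, hηt, rfl⟩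
    have htpos : 0 < t := by
      rcases lt_or_eq_of_le ht with h | h
      · exact h
      · exfalso; apply hzx; rw [← hη0, ← hηt, ← h]
    set g : ℝ → ℝ := fun s => w (η s) with hg
    have hg_lip : LipschitzOnWith (1 * K) g (Set.Icc 0 t) :=
      hw_lip.comp_lipschitzOnWith hK
    -- a.e. differentiability of η on the open interval
    have hη_diff : ∀ᵐ s : ℝ, s ∈ Set.Icc (0:ℝ) t → s ∈ Set.Ioo (0:ℝ) t →
        DifferentiableAt ℝ η s := by
      have h := hK.ae_differentiableWithinAt (μ := volume) measurableSet_Icc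
      rw [ae_restrict_iff' measurableSet_Icc] at h
      filter_upwards [h] with s hs hsIcc hsIoo
      exact (hs hsIcc).differentiableAt (Icc_mem_nhds hsIoo.1 hsIoo.2)
    have h0t : ∀ᵐ s : ℝ, s ≠ 0 ∧ s ≠ t := by
      have h1 : ∀ᵐ s : ℝ, s ≠ 0 := by
        rw [ae_iff]; simpa using measure_singleton (0:ℝ)
      have h2 : ∀ᵐ s : ℝ, s ≠ t := by
        rw [ae_iff]; simpa using measure_singleton t
      filter_upwards [h1, h2] with s using And.intro
    -- the pointwise inequality
    have hpoint : ∀ᵐ s ∂(volume.restrict (Set.Icc (0:ℝ) t)),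
        m * deriv g s ≤ (1/2) * ‖deriv η s‖ ^ 2 - V (η s) := by
      rw [ae_restrict_iff' measurableSet_Icc]
      filter_upwards [hη_diff, h0t] with s hdiff hne hsIcc
      have hsIoo : s ∈ Set.Ioo (0:ℝ) t :=
        ⟨lt_of_le_of_ne hsIcc.1 (Ne.symm hne.1), lt_of_le_of_ne hsIcc.2 hne.2⟩
      have hηd : DifferentiableAt ℝ η s := hdiff hsIcc hsIoo
      by_cases hball' : dist (η s) z ≤ ρ
      · -- inside the ball
        have hV : V (η s) ≤ -c := hball _ hball'
        have habs : |deriv g s| ≤ ‖deriv η s‖ := abs_deriv_comp_le hw_lip hηd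
        have h1 : m * deriv g s ≤ m * ‖deriv η s‖ := by
          have := le_trans (le_abs_self _) habs
          exact mul_le_mul_of_nonneg_left this hmpos.le
        have h2 : m * ‖deriv η s‖ ≤ (1/2) * ‖deriv η s‖ ^ 2 + c := by
          nlinarith [sq_nonneg (‖deriv η s‖ - m)]
        linarith
      · -- outside the ball: g is locally constant
        push_neg at hball'
        have hopen : {ζ : E2 | ρ < dist ζ z} ∈ 𝓝 (η s) := by
          apply IsOpen.mem_nhds
          · exact isOpen_lt continuous_const (Continuous.dist continuous_id continuous_const)
          · exact hball'
        have hev : g =ᶠ[𝓝 s] (fun _ => ρ) := by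
          filter_upwards [hηd.continuousAt.preimage_mem_nhds hopen] with y hy
          rw [hg]
          simp only
          rw [hw]
          simp only
          rw [min_eq_right (le_of_lt hy)]
        have hderiv0 : deriv g s = 0 := by rw [hev.deriv_eq]; exact deriv_const _ _
        rw [hderiv0, mul_zero]
        have h1 : (0:ℝ) ≤ ‖deriv η s‖ ^ 2 := by positivity
        have h2 := hV0 (η s)
        linarith
    -- integrability
    have hmeasIoo : ∀ s ∈ Set.Ioo (0:ℝ) t, |deriv g s| ≤ ((1*K : NNReal) : ℝ) ∧
        ‖deriv η s‖ ≤ (K : ℝ) := by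
      intro s hs
      have hmem : Set.Icc (0:ℝ) t ∈ 𝓝 s := Icc_mem_nhds hs.1 hs.2
      constructor
      · simpa [Real.norm_eq_abs] using norm_deriv_le_of_lipschitzOn hmem hg_lip
      · exact norm_deriv_le_of_lipschitzOn hmem hK
    have haeIoo : ∀ᵐ s ∂(volume.restrict (Set.uIoc (0:ℝ) t)), s ∈ Set.Ioo (0:ℝ) t := by
      rw [ae_restrict_iff' measurableSet_uIoc]
      filter_upwards [h0t] with s hne hs
      rw [Set.uIoc_of_le ht] at hs
      exact ⟨hs.1, lt_of_le_of_ne hs.2 hne.2⟩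
    have Ig : IntervalIntegrable (fun s => deriv g s) volume 0 t := by
      rw [intervalIntegrable_iff]
      apply MeasureTheory.Integrable.mono' (g := fun _ => ((1*K : NNReal) : ℝ))
      · exact integrableOn_const measure_Ioc_lt_top.ne
      · exact (measurable_deriv g).aestronglyMeasurable.restrict
      · filter_upwards [haeIoo] with s hs
        rw [Real.norm_eq_abs]
        exact (hmeasIoo s hs).1
    have Iη2 : IntervalIntegrable (fun s => (1/2) * ‖deriv η s‖ ^ 2) volume 0 t := by
      rw [intervalIntegrable_iff]
      apply MeasureTheory.Integrable.mono' (g := fun _ => (1/2) * (K : ℝ) ^ 2)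
      · exact integrableOn_const measure_Ioc_lt_top.ne
      · exact (((measurable_deriv η).norm.pow_const 2).const_mul _).aestronglyMeasurable.restrict
      · filter_upwards [haeIoo] with s hs
        have := (hmeasIoo s hs).2
        rw [Real.norm_eq_abs, abs_of_nonneg (by positivity)]
        nlinarith [norm_nonneg (deriv η s)]
    have IV : IntervalIntegrable (fun s => V (η s)) volume 0 t := by
      apply ContinuousOn.intervalIntegrable
      rw [Set.uIcc_of_le ht]
      exact hVc.comp_continuousOn hK.continuousOn
    -- FTC
    have hgt : g t = ρ := by rw [hg]; simp only; rw [hηt, hwx]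
    have hg0 : g 0 = 0 := by rw [hg]; simp only; rw [hη0, hw0]
    have hftc : ∫ s in (0:ℝ)..t, deriv g s = ρ := by
      rw [lipOn_integral_deriv ht hg_lip, hgt, hg0, sub_zero]
    have hint1 : ∫ s in (0:ℝ)..t, m * deriv g s = m * ρ := by
      rw [intervalIntegral.integral_const_mul, hftc]
    calc m * ρ = ∫ s in (0:ℝ)..t, m * deriv g s := hint1.symm
      _ ≤ ∫ s in (0:ℝ)..t, ((1/2) * ‖deriv η s‖ ^ 2 - V (η s)) :=
          intervalIntegral.integral_mono_ae_restrict ht (Ig.const_mul m) (Iη2.sub IV) hpoint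
      _ = actInt V 0 t η := rfl
  -- the admissible set is nonempty: the straight segment
  have hne : {A : ℝ | ∃ t : ℝ, 0 ≤ t ∧ ∃ η : ℝ → E2,
      (∃ K : NNReal, LipschitzOnWith K η (Set.Icc 0 t)) ∧ η 0 = z ∧ η t = x ∧
      A = actInt V 0 t η}.Nonempty := by
    set T : ℝ := ‖x - z‖ with hT
    set d : E2 := T⁻¹ • (x - z) with hd
    refine ⟨actInt V 0 T (fun s => z + s • d), T, hxz.le, (fun s => z + s • d), ⟨‖d‖₊, ?_⟩,
      by simp, ?_, rfl⟩
    · apply LipschitzWith.lipschitzOnWith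
      apply LipschitzWith.of_dist_le_mul
      intro s s'
      rw [dist_eq_norm, dist_eq_norm]
      have : z + s • d - (z + s' • d) = (s - s') • d := by
        rw [sub_smul]; abel
      rw [this, norm_smul, coe_nnnorm, Real.norm_eq_abs, ← Real.norm_eq_abs, Real.norm_eq_abs,
        mul_comm]
    · show z + T • d = x
      rw [hd, smul_smul, mul_inv_cancel₀ (ne_of_gt hxz), one_smul]
      abel
  have : m * ρ ≤ hmin V z x := le_csInf hne key
  have : 0 < m * ρ := by positivity
  linarith

/-- An ECCUS is injective, and `h` is additive along it. -/
theorem statement_8 (V : E2 → ℝ) (a b : ℝ) (hM : AssumptionM V a b)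
    (p : E2) (v : E2 → ℝ) (hv : IsSubsolution V p 0 v)
    (ξ : ℝ → E2) (hξ : IsECCUS V p v ξ) :
    Function.Injective ξ ∧
    ∀ s₁ s₂ s₃ : ℝ, s₁ < s₂ → s₂ < s₃ →
      hmin V (ξ s₁) (ξ s₃) = hmin V (ξ s₁) (ξ s₂) + hmin V (ξ s₂) (ξ s₃) := by
  obtain ⟨⟨Kξ, hξlip⟩, hξspeed, hcal⟩ := hξ
  have hVc : Continuous V := hM.smooth.continuous
  have hnn := hmin_nonneg V hM.nonpos
  have main : ∀ s₁ s₂ : ℝ, s₁ < s₂ → ξ s₁ = ξ s₂ → False := by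
    intro s₁ s₂ h12 heq
    -- Step A: the curve is not constant on [s₁, s₂]
    obtain ⟨s₀, hs₀, hξs₀⟩ : ∃ s₀ ∈ Set.Ioo s₁ s₂, ξ s₀ ≠ ξ s₁ := by
      by_contra hcon
      push_neg at hcon
      have hsub : Set.Ioo s₁ s₂ ⊆ {s : ℝ | ¬ ‖deriv ξ s‖ = 1} := by
        intro s hs
        have hev : ξ =ᶠ[𝓝 s] (fun _ => ξ s₁) := by
          filter_upwards [Ioo_mem_nhds hs.1 hs.2] with y hy
          exact hcon y hy
        have : deriv ξ s = 0 := by rw [hev.deriv_eq]; exact deriv_const _ _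
        simp [this]
      have hz : volume (Set.Ioo s₁ s₂) = 0 :=
        measure_mono_null hsub (ae_iff.1 hξspeed)
      rw [Real.volume_Ioo, ENNReal.ofReal_eq_zero] at hz
      linarith
    -- Step B: pick a distance avoiding lattice distances
    set r : ℝ := ‖ξ s₀ - ξ s₁‖ with hr
    have hrpos : 0 < r := by
      rw [hr, norm_pos_iff, sub_ne_zero]; exact hξs₀
    set D : Set ℝ := Set.range (fun k : ℤ × ℤ => ‖pt k.1 k.2 - ξ s₁‖) with hD
    have hDc : D.Countable := Set.countable_range _
    obtain ⟨d, hdIoo, hdD⟩ : ∃ d ∈ Set.Ioo (0:ℝ) r, d ∉ D := by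
      rw [← Set.not_subset_iff_exists_mem_notMem]
      intro hsub
      have hz : volume (Set.Ioo (0:ℝ) r) = 0 :=
        measure_mono_null hsub (hDc.measure_zero volume)
      rw [Real.volume_Ioo, ENNReal.ofReal_eq_zero] at hz
      linarith
    -- Step C: IVT
    obtain ⟨s', hs'Icc, hs'⟩ : ∃ s' ∈ Set.Icc s₁ s₀, ‖ξ s' - ξ s₁‖ = d := by
      have hcontf : ContinuousOn (fun s => ‖ξ s - ξ s₁‖) (Set.Icc s₁ s₀) :=
        ((hξlip.continuous.sub continuous_const).norm).continuousOn
      have him := intermediate_value_Icc hs₀.1.le hcontf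
      have hd' : d ∈ Set.Icc (‖ξ s₁ - ξ s₁‖) (‖ξ s₀ - ξ s₁‖) := by
        simp only [sub_self, norm_zero]
        exact ⟨hdIoo.1.le, hdIoo.2.le⟩
      obtain ⟨s', hs', hval⟩ := him hd'
      exact ⟨s', hs', hval⟩
    have hdpos : (0:ℝ) < d := hdIoo.1
    have hs₁s' : s₁ < s' := by
      rcases lt_or_eq_of_le hs'Icc.1 with h | h
      · exact h
      · exfalso
        rw [← h, sub_self, norm_zero] at hs'
        linarith
    have hs's₂ : s' < s₂ := lt_of_le_of_lt hs'Icc.2 hs₀.2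
    have hzx : ξ s' ≠ ξ s₁ := by
      intro h
      rw [h, sub_self, norm_zero] at hs'
      linarith
    have hVz : V (ξ s') < 0 := by
      rcases lt_or_eq_of_le (hM.nonpos (ξ s')) with h | h
      · exact h
      · exfalso
        obtain ⟨k, hk⟩ := (hM.zeroSet (ξ s')).1 h
        refine hdD ⟨k, ?_⟩
        show ‖pt (k.1 : ℝ) (k.2 : ℝ) - ξ s₁‖ = d
        rw [← hk]
        exact hs'
    -- Step E: calibration forces hmin (ξ s') (ξ s₁) = 0, contradicting positivity
    have hA := hcal s₁ s' hs₁s'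
    have hB := hcal s' s₂ hs's₂
    rw [← heq] at hB
    have hnn1 := hnn (ξ s₁) (ξ s')
    have hnn2 := hnn (ξ s') (ξ s₁)
    have hpos : 0 < hmin V (ξ s') (ξ s₁) := hmin_pos hVc hM.nonpos hVz hzx
    linarith
  constructor
  · intro s₁ s₂ heq
    by_contra hne
    rcases lt_trichotomy s₁ s₂ with h | h | h
    · exact main s₁ s₂ h heq
    · exact hne h
    · exact main s₂ s₁ h heq.symm
  · intro s₁ s₂ s₃ h12 h23
    have h1 := hcal s₁ s₂ h12
    have h2 := hcal s₂ s₃ h23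
    have h3 := hcal s₁ s₃ (h12.trans h23)
    linarith
end
end

section
/- Assume Assumption (M). Let ξ : [0, ∞) → ℝ² be a C² curve satisfying ξ̈(t) = −DV(ξ(t)) for all t ≥ 0 and (ξ(t), ξ̇(t)) → ((0,0), (0,0)) as t → ∞. Then there exist constants M > 0 and λ > 0 such that |ξ(t)| + |ξ̇(t)| ≤ M e^{−λ t} for all t ≥ 0. -/
noncomputable section

open MeasureTheory Filter Topology Real
open scoped RealInnerProductSpace

lemma pt_zero : pt 0 0 = (0 : E2) := by
  ext i; fin_cases i <;> simp [pt]

/-- The inverse Riesz map as a genuinely `ℝ`-linear continuous map. -/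
def dualIso : StrongDual ℝ E2 →L[ℝ] E2 :=
  { toFun := fun ℓ => (InnerProductSpace.toDual ℝ E2).symm ℓ
    map_add' := fun x y => map_add _ x y
    map_smul' := fun r ℓ => by
      have := (InnerProductSpace.toDual ℝ E2).symm.map_smulₛₗ r ℓ
      simpa using this
    cont := (InnerProductSpace.toDual ℝ E2).symm.continuous }

lemma dualIso_inner (ℓ : StrongDual ℝ E2) (x : E2) : ⟪dualIso ℓ, x⟫ = ℓ x :=
  InnerProductSpace.toDual_symm_apply

lemma inner_gradient (V : E2 → ℝ) (y v : E2) :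
    ⟪gradient V y, v⟫ = fderiv ℝ V y v :=
  InnerProductSpace.toDual_symm_apply

lemma gradient_zero_of_max (V : E2 → ℝ) (h0 : V 0 = 0) (hle : ∀ x, V x ≤ 0) :
    gradient V 0 = 0 := by
  have hmax : IsLocalMax V 0 := Filter.Eventually.of_forall (fun x => (hle x).trans_eq h0.symm)
  rw [gradient, hmax.fderiv_eq_zero, map_zero]

lemma fderiv_V_diff (V : E2 → ℝ) (hV : ContDiff ℝ (⊤ : ℕ∞) V) :
    Differentiable ℝ (fderiv ℝ V) :=
  (hV.fderiv_right (m := 1) (by exact WithTop.coe_le_coe.mpr le_top)).differentiable one_ne_zero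

lemma gradient_hasFDerivAt (V : E2 → ℝ) (hV : ContDiff ℝ (⊤ : ℕ∞) V) (y : E2) :
    HasFDerivAt (fun z => gradient V z) (dualIso.comp (fderiv ℝ (fderiv ℝ V) y)) y :=
  dualIso.hasFDerivAt.comp y (fderiv_V_diff V hV y).hasFDerivAt

lemma grad_fderiv (V : E2 → ℝ) (hV : ContDiff ℝ (⊤ : ℕ∞) V) (v w : E2) :
    ⟪fderiv ℝ (fun y => gradient V y) 0 v, w⟫ = fderiv ℝ (fderiv ℝ V) 0 v w := by
  rw [(gradient_hasFDerivAt V hV 0).fderiv]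
  exact dualIso_inner _ _

lemma hess_symm (V : E2 → ℝ) (hV : ContDiff ℝ (⊤ : ℕ∞) V) (v w : E2) :
    ⟪fderiv ℝ (fun y => gradient V y) 0 v, w⟫ = ⟪fderiv ℝ (fun y => gradient V y) 0 w, v⟫ := by
  rw [grad_fderiv V hV, grad_fderiv V hV]
  exact (hV.contDiffAt.isSymmSndFDerivAt (by
    rw [minSmoothness_of_isRCLikeNormedField]; exact WithTop.coe_le_coe.mpr le_top)) v w


lemma hess_neg (V : E2 → ℝ) (a b : ℝ) (hM : AssumptionM V a b) (x : E2) :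
    ⟪fderiv ℝ (fun y => gradient V y) 0 x, x⟫ ≤ -(a ^ 2) * ‖x‖ ^ 2 := by
  obtain ⟨va, vb, hva, hvb, hea, heb⟩ := hM.eigen
  set A := fderiv ℝ (fun y => gradient V y) 0 with hA
  have hva2 : ⟪va, va⟫ = 1 := by
    rw [real_inner_self_eq_norm_sq, hva]; norm_num
  have hvb2 : ⟪vb, vb⟫ = 1 := by
    rw [real_inner_self_eq_norm_sq, hvb]; norm_num
  have horth : ⟪va, vb⟫ = 0 := by
    have h1 : ⟪A va, vb⟫ = -(a ^ 2) * ⟪va, vb⟫ := by rw [hea, real_inner_smul_left]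
    have h2 : ⟪A vb, va⟫ = -(b ^ 2) * ⟪va, vb⟫ := by
      rw [heb, real_inner_smul_left, real_inner_comm]
    have h3 := hess_symm V hM.smooth va vb
    rw [h1, h2] at h3
    have hab2 : a ^ 2 < b ^ 2 := by nlinarith [hM.ha, hM.hab]
    nlinarith [h3]
  have hvba : ⟪vb, va⟫ = 0 := by rw [real_inner_comm]; exact horth
  have hspan : ∃ s u : ℝ, x = s • va + u • vb := by
    have hon : Orthonormal ℝ (![va, vb] : Fin 2 → E2) := by
      constructor
      · intro i; fin_cases i
        · exact hva
        · exact hvb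
      · intro i j hij
        fin_cases i <;> fin_cases j
        · exact absurd rfl hij
        · exact horth
        · exact hvba
        · exact absurd rfl hij
    have hcard : Fintype.card (Fin 2) = Module.finrank ℝ E2 := by
      simp [finrank_euclideanSpace_fin]
    let B := basisOfLinearIndependentOfCardEqFinrank hon.linearIndependent hcard
    have hBc : ⇑B = ![va, vb] :=
      coe_basisOfLinearIndependentOfCardEqFinrank hon.linearIndependent hcard
    have h0 : B 0 = va := by rw [congrFun hBc 0]; rfl
    have h1 : B 1 = vb := by rw [congrFun hBc 1]; rfl
    refine ⟨B.repr x 0, B.repr x 1, ?_⟩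
    have hsum := B.sum_repr x
    rw [Fin.sum_univ_two, h0, h1] at hsum
    exact hsum.symm
  obtain ⟨s, u, rfl⟩ := hspan
  have hnorm : ‖s • va + u • vb‖ ^ 2 = s ^ 2 + u ^ 2 := by
    rw [← real_inner_self_eq_norm_sq]
    simp only [inner_add_left, inner_add_right, real_inner_smul_left, real_inner_smul_right,
      hva2, hvb2, horth, hvba]
    ring
  have hinner : ⟪A (s • va + u • vb), s • va + u • vb⟫ = -(a ^ 2) * s ^ 2 + -(b ^ 2) * u ^ 2 := by
    simp only [map_add, ContinuousLinearMap.map_smul, hea, heb, inner_add_left, inner_add_right,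
      real_inner_smul_left, real_inner_smul_right, hva2, hvb2, horth, hvba, smul_smul]
    ring
  rw [hinner, hnorm]
  have hab2 : a ^ 2 ≤ b ^ 2 := by nlinarith [hM.ha, hM.hab]
  nlinarith [mul_nonneg (sub_nonneg.mpr hab2) (sq_nonneg u)]

lemma V_zero (V : E2 → ℝ) (a b : ℝ) (hM : AssumptionM V a b) : V 0 = 0 :=
  (hM.zeroSet 0).mpr ⟨(0, 0), by simp [pt_zero]⟩

lemma ray_deriv (V : E2 → ℝ) (hV : ContDiff ℝ (⊤ : ℕ∞) V) (x : E2) (s : ℝ) :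
    HasDerivAt (fun r : ℝ => V (r • x)) ⟪gradient V (s • x), x⟫ s := by
  have h1 : HasDerivAt (fun r : ℝ => r • x) x s := by
    simpa using (hasDerivAt_id s).smul_const x
  have h2 := (hV.differentiable (by simp) (s • x)).hasFDerivAt
  have h3 := h2.comp_hasDerivAt s h1
  rw [inner_gradient]
  exact h3

lemma poly_deriv (C s : ℝ) : HasDerivAt (fun r : ℝ => C * r ^ 2 / 2) (C * s) s := by
  have h2 := ((hasDerivAt_pow 2 s).const_mul C).div_const 2
  exact h2.congr_deriv (by rw [show (2:ℕ) - 1 = 1 from rfl, pow_one]; push_cast; ring)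

lemma ray_bound_le (V : E2 → ℝ) (hV : ContDiff ℝ (⊤ : ℕ∞) V) (x : E2) (C : ℝ)
    (h : ∀ s ∈ Set.Ioo (0:ℝ) 1, ⟪gradient V (s • x), x⟫ ≤ C * s) :
    V x ≤ V 0 + C / 2 := by
  set ψ : ℝ → ℝ := fun s => V (s • x) - C * s ^ 2 / 2 with hψ
  have hd : ∀ s : ℝ, HasDerivAt ψ (⟪gradient V (s • x), x⟫ - C * s) s := fun s =>
    (ray_deriv V hV x s).sub (poly_deriv C s)
  have hanti : AntitoneOn ψ (Set.Icc 0 1) := by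
    apply antitoneOn_of_deriv_nonpos (convex_Icc 0 1)
    · exact fun s _ => ((hd s).continuousAt).continuousWithinAt
    · exact fun s _ => ((hd s).differentiableAt).differentiableWithinAt
    · intro s hs
      rw [interior_Icc] at hs
      rw [(hd s).deriv]
      linarith [h s hs]
  have key := hanti (Set.mem_Icc.mpr ⟨le_refl 0, zero_le_one⟩)
    (Set.mem_Icc.mpr ⟨zero_le_one, le_refl 1⟩) zero_le_one
  have e1 : ψ 1 = V x - C / 2 := by simp [hψ]
  have e0 : ψ 0 = V 0 := by simp [hψ]
  rw [e1, e0] at key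
  linarith

lemma ray_bound_ge (V : E2 → ℝ) (hV : ContDiff ℝ (⊤ : ℕ∞) V) (x : E2) (C : ℝ)
    (h : ∀ s ∈ Set.Ioo (0:ℝ) 1, C * s ≤ ⟪gradient V (s • x), x⟫) :
    V 0 + C / 2 ≤ V x := by
  set ψ : ℝ → ℝ := fun s => V (s • x) - C * s ^ 2 / 2 with hψ
  have hd : ∀ s : ℝ, HasDerivAt ψ (⟪gradient V (s • x), x⟫ - C * s) s := fun s =>
    (ray_deriv V hV x s).sub (poly_deriv C s)
  have hmono : MonotoneOn ψ (Set.Icc 0 1) := by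
    apply monotoneOn_of_deriv_nonneg (convex_Icc 0 1)
    · exact fun s _ => ((hd s).continuousAt).continuousWithinAt
    · exact fun s _ => ((hd s).differentiableAt).differentiableWithinAt
    · intro s hs
      rw [interior_Icc] at hs
      rw [(hd s).deriv]
      linarith [h s hs]
  have key := hmono (Set.mem_Icc.mpr ⟨le_refl 0, zero_le_one⟩)
    (Set.mem_Icc.mpr ⟨zero_le_one, le_refl 1⟩) zero_le_one
  have e1 : ψ 1 = V x - C / 2 := by simp [hψ]
  have e0 : ψ 0 = V 0 := by simp [hψ]
  rw [e1, e0] at key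
  linarith

lemma local_est (V : E2 → ℝ) (a b : ℝ) (hM : AssumptionM V a b) :
    ∃ δ : ℝ, 0 < δ ∧ ∃ K : ℝ, 0 < K ∧ ∀ x : E2, ‖x‖ < δ →
      ⟪gradient V x, x⟫ ≤ -(3/4) * a ^ 2 * ‖x‖ ^ 2 ∧
      ‖gradient V x‖ ≤ K * ‖x‖ ∧
      V x ≤ -(3/8) * a ^ 2 * ‖x‖ ^ 2 ∧
      -V x ≤ (K / 2) * ‖x‖ ^ 2 := by
  have hV := hM.smooth
  have hgrad0 : gradient V 0 = 0 :=
    gradient_zero_of_max V (V_zero V a b hM) hM.nonpos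
  have hdA := gradient_hasFDerivAt V hV 0
  set A := dualIso.comp (fderiv ℝ (fderiv ℝ V) 0) with hAdef
  have hfd : fderiv ℝ (fun y => gradient V y) 0 = A := hdA.fderiv
  have hneg : ∀ x : E2, ⟪A x, x⟫ ≤ -(a ^ 2) * ‖x‖ ^ 2 := by
    intro x
    have := hess_neg V a b hM x
    rwa [hfd] at this
  -- little-o estimate
  have hlo : (fun h : E2 => gradient V h - A h) =o[𝓝 0] fun h : E2 => h := by
    have := hasFDerivAt_iff_isLittleO_nhds_zero.mp hdA
    simpa [hgrad0] using this
  have hsq : 0 < a ^ 2 := pow_pos hM.ha 2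
  have hev := hlo.def (show (0:ℝ) < a ^ 2 / 4 by linarith)
  rw [Metric.eventually_nhds_iff] at hev
  obtain ⟨δ, hδ, hball⟩ := hev
  set K := ‖A‖ + a ^ 2 with hK
  have hKpos : 0 < K := add_pos_of_nonneg_of_pos (norm_nonneg A) hsq
  refine ⟨δ, hδ, K, hKpos, ?_⟩
  -- first, the pointwise gradient estimates on the ball
  have hgrad_est : ∀ x : E2, ‖x‖ < δ →
      ⟪gradient V x, x⟫ ≤ -(3/4) * a ^ 2 * ‖x‖ ^ 2 ∧ ‖gradient V x‖ ≤ K * ‖x‖ := by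
    intro x hx
    have hdist : dist x 0 < δ := by rwa [dist_zero_right]
    have hsm : ‖gradient V x - A x‖ ≤ a ^ 2 / 4 * ‖x‖ := hball hdist
    constructor
    · have h1 : ⟪gradient V x - A x, x⟫ ≤ ‖gradient V x - A x‖ * ‖x‖ := real_inner_le_norm _ _
      have h2 : ⟪gradient V x, x⟫ = ⟪A x, x⟫ + ⟪gradient V x - A x, x⟫ := by
        rw [← inner_add_left]
        congr 1
        abel
      rw [h2]
      have h3 : ‖gradient V x - A x‖ * ‖x‖ ≤ a ^ 2 / 4 * ‖x‖ ^ 2 := by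
        have := mul_le_mul_of_nonneg_right hsm (norm_nonneg x)
        calc ‖gradient V x - A x‖ * ‖x‖ ≤ a ^ 2 / 4 * ‖x‖ * ‖x‖ := this
          _ = a ^ 2 / 4 * ‖x‖ ^ 2 := by ring
      have h4 := hneg x
      nlinarith [h1, h3, h4]
    · have h5 : ‖A x‖ ≤ ‖A‖ * ‖x‖ := A.le_opNorm x
      have h6 : ‖gradient V x‖ ≤ ‖A x‖ + ‖gradient V x - A x‖ := by
        have := norm_add_le (A x) (gradient V x - A x)
        simpa using this
      have h7 : a ^ 2 / 4 * ‖x‖ ≤ a ^ 2 * ‖x‖ := by nlinarith [norm_nonneg x, hsq]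
      calc ‖gradient V x‖ ≤ ‖A x‖ + ‖gradient V x - A x‖ := h6
        _ ≤ ‖A‖ * ‖x‖ + a ^ 2 / 4 * ‖x‖ := add_le_add h5 hsm
        _ ≤ ‖A‖ * ‖x‖ + a ^ 2 * ‖x‖ := by linarith
        _ = K * ‖x‖ := by rw [hK]; ring
  intro x hx
  obtain ⟨hg1, hg2⟩ := hgrad_est x hx
  refine ⟨hg1, hg2, ?_, ?_⟩
  · -- V x ≤ -(3/8) a² ‖x‖²
    have h := ray_bound_le V hV x (-(3/4) * a ^ 2 * ‖x‖ ^ 2) ?_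
    · rw [V_zero V a b hM] at h
      linarith
    · intro s hs
      obtain ⟨hs0, hs1⟩ := hs
      have hsx : ‖s • x‖ < δ := by
        rw [norm_smul, Real.norm_eq_abs, abs_of_pos hs0]
        calc s * ‖x‖ ≤ 1 * ‖x‖ := by
              apply mul_le_mul_of_nonneg_right (le_of_lt hs1) (norm_nonneg x)
          _ = ‖x‖ := one_mul _
          _ < δ := hx
      have := (hgrad_est (s • x) hsx).1
      have hinner : ⟪gradient V (s • x), s • x⟫ = s * ⟪gradient V (s • x), x⟫ :=
        real_inner_smul_right _ _ _
      rw [hinner] at this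
      have hns : ‖s • x‖ ^ 2 = s ^ 2 * ‖x‖ ^ 2 := by
        rw [norm_smul, Real.norm_eq_abs, mul_pow, sq_abs]
      rw [hns] at this
      have hfin : s * ⟪gradient V (s • x), x⟫ ≤ s * (-(3/4) * a ^ 2 * ‖x‖ ^ 2 * s) := by
        calc s * ⟪gradient V (s • x), x⟫ ≤ -(3/4) * a ^ 2 * (s ^ 2 * ‖x‖ ^ 2) := this
          _ = s * (-(3/4) * a ^ 2 * ‖x‖ ^ 2 * s) := by ring
      exact le_of_mul_le_mul_left hfin hs0
  · -- -V x ≤ K/2 ‖x‖²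
    have h := ray_bound_ge V hV x (-(K * ‖x‖ ^ 2)) ?_
    · rw [V_zero V a b hM] at h
      linarith
    · intro s hs
      obtain ⟨hs0, hs1⟩ := hs
      have hsx : ‖s • x‖ < δ := by
        rw [norm_smul, Real.norm_eq_abs, abs_of_pos hs0]
        calc s * ‖x‖ ≤ 1 * ‖x‖ := by
              apply mul_le_mul_of_nonneg_right (le_of_lt hs1) (norm_nonneg x)
          _ = ‖x‖ := one_mul _
          _ < δ := hx
      have hg := (hgrad_est (s • x) hsx).2
      have h1 : |⟪gradient V (s • x), x⟫| ≤ ‖gradient V (s • x)‖ * ‖x‖ :=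
        abs_real_inner_le_norm _ _
      have h2 : ‖gradient V (s • x)‖ * ‖x‖ ≤ K * (s * ‖x‖) * ‖x‖ := by
        apply mul_le_mul_of_nonneg_right _ (norm_nonneg x)
        calc ‖gradient V (s • x)‖ ≤ K * ‖s • x‖ := hg
          _ = K * (s * ‖x‖) := by rw [norm_smul, Real.norm_eq_abs, abs_of_pos hs0]
      have h3 : -(K * ‖x‖ ^ 2) * s = -(K * (s * ‖x‖) * ‖x‖) := by ring
      rw [h3]
      have := neg_abs_le ⟪gradient V (s • x), x⟫
      linarith [h1.trans h2]

lemma mono_aux {f f' : ℝ → ℝ} {T : ℝ} (hT : 0 ≤ T)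
    (hd : ∀ t ∈ Set.Ici (0:ℝ), HasDerivWithinAt f (f' t) (Set.Ici 0) t)
    (h0 : ∀ t, T < t → 0 ≤ f' t) : MonotoneOn f (Set.Ici T) := by
  apply monotoneOn_of_deriv_nonneg (convex_Ici T)
  · exact fun s hs =>
      ((hd s (hT.trans hs)).continuousWithinAt).mono (Set.Ici_subset_Ici.mpr hT)
  · intro s hs
    rw [interior_Ici] at hs
    exact (((hd s (hT.trans hs.le)).hasDerivAt
      (Ici_mem_nhds (hT.trans_lt hs))).differentiableAt).differentiableWithinAt
  · intro s hs
    rw [interior_Ici] at hs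
    rw [((hd s (hT.trans hs.le)).hasDerivAt (Ici_mem_nhds (hT.trans_lt hs))).deriv]
    exact h0 s hs

lemma anti_aux {f f' : ℝ → ℝ} {T : ℝ} (hT : 0 ≤ T)
    (hd : ∀ t ∈ Set.Ici (0:ℝ), HasDerivWithinAt f (f' t) (Set.Ici 0) t)
    (h0 : ∀ t, T < t → f' t ≤ 0) : AntitoneOn f (Set.Ici T) := by
  apply antitoneOn_of_deriv_nonpos (convex_Ici T)
  · exact fun s hs =>
      ((hd s (hT.trans hs)).continuousWithinAt).mono (Set.Ici_subset_Ici.mpr hT)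
  · intro s hs
    rw [interior_Ici] at hs
    exact (((hd s (hT.trans hs.le)).hasDerivAt
      (Ici_mem_nhds (hT.trans_lt hs))).differentiableAt).differentiableWithinAt
  · intro s hs
    rw [interior_Ici] at hs
    rw [((hd s (hT.trans hs.le)).hasDerivAt (Ici_mem_nhds (hT.trans_lt hs))).deriv]
    exact h0 s hs

lemma sqrt_exp_eq (y : ℝ) : Real.sqrt (Real.exp y) = Real.exp (y / 2) := by
  rw [show Real.exp y = Real.exp (y / 2) ^ 2 by
    rw [sq, ← Real.exp_add]; ring_nf]
  exact Real.sqrt_sq (Real.exp_pos _).le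

lemma exp_deriv_aux (c s : ℝ) :
    HasDerivAt (fun t : ℝ => Real.exp (c * t)) (Real.exp (c * s) * c) s := by
  have h1 : HasDerivAt (fun t : ℝ => c * t) c s := by
    simpa using (hasDerivAt_id s).const_mul c
  exact h1.exp


/-- A solution of `ξ̈ = −DV(ξ)` on `[0,∞)` with `(ξ, ξ̇) → ((0,0),(0,0))`
converges exponentially fast: `|ξ(t)| + |ξ̇(t)| ≤ M e^{−λt}`. -/
theorem statement_17 (V : E2 → ℝ) (a b : ℝ) (hM : AssumptionM V a b)
    (ξ ξ' : ℝ → E2)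
    (hd1 : ∀ t ∈ Set.Ici (0:ℝ), HasDerivWithinAt ξ (ξ' t) (Set.Ici 0) t)
    (hd2 : ∀ t ∈ Set.Ici (0:ℝ), HasDerivWithinAt ξ' (-gradient V (ξ t)) (Set.Ici 0) t)
    (hlim : Filter.Tendsto (fun t => (ξ t, ξ' t)) Filter.atTop
      (nhds ((0 : E2), (0 : E2)))) :
    ∃ M lam : ℝ, 0 < M ∧ 0 < lam ∧
      ∀ t : ℝ, 0 ≤ t → ‖ξ t‖ + ‖ξ' t‖ ≤ M * Real.exp (-(lam * t)) := by
  obtain ⟨δ, hδ, K, hKpos, hest⟩ := local_est V a b hM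
  have ha := hM.ha
  have hVd : Differentiable ℝ V := hM.smooth.differentiable (by simp)
  have hV0 : V 0 = 0 := V_zero V a b hM
  have hξlim : Tendsto ξ atTop (𝓝 0) := by
    have := (continuous_fst.tendsto ((0:E2), (0:E2))).comp hlim
    exact this
  have hξ'lim : Tendsto ξ' atTop (𝓝 0) := by
    have := (continuous_snd.tendsto ((0:E2), (0:E2))).comp hlim
    exact this
  -- energy conservation
  set En : ℝ → ℝ := fun t => (1/2) * ⟪ξ' t, ξ' t⟫ + V (ξ t) with hEdef
  have hE' : ∀ t ∈ Set.Ici (0:ℝ), HasDerivWithinAt En 0 (Set.Ici 0) t := by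
    intro t ht
    have h1 := ((hd2 t ht).inner ℝ (hd2 t ht)).const_mul (1/2 : ℝ)
    have h2 := (hVd (ξ t)).hasFDerivAt.comp_hasDerivWithinAt t (hd1 t ht)
    have h3 := h1.add h2
    have hval : (1/2 : ℝ) * (⟪ξ' t, -gradient V (ξ t)⟫ + ⟪-gradient V (ξ t), ξ' t⟫)
        + fderiv ℝ V (ξ t) (ξ' t) = 0 := by
      rw [← inner_gradient]
      simp only [inner_neg_left, inner_neg_right]
      rw [real_inner_comm (ξ' t) (gradient V (ξ t))]
      ring
    rw [hval] at h3
    exact h3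
  have hEconst : ∀ t ∈ Set.Ici (0:ℝ), En t = En 0 := by
    intro t ht
    have hcont : ContinuousOn En (Set.Icc 0 t) := fun s hs =>
      ((hE' s hs.1).continuousWithinAt).mono Set.Icc_subset_Ici_self
    have := constant_of_has_deriv_right_zero hcont (fun s hs =>
      (hE' s hs.1).mono (Set.Ici_subset_Ici.mpr hs.1))
    exact this t ⟨ht, le_refl t⟩
  have hElim : Tendsto En atTop (𝓝 0) := by
    have hc : Continuous fun p : E2 × E2 => (1/2 : ℝ) * ⟪p.2, p.2⟫ + V p.1 :=
      (continuous_const.mul (continuous_snd.inner continuous_snd)).add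
        (hM.smooth.continuous.comp continuous_fst)
    have h := (hc.tendsto ((0:E2), (0:E2))).comp hlim
    rw [show (0:ℝ) = (1/2 : ℝ) * ⟪(0:E2), (0:E2)⟫ + V 0 by simp [hV0]]
    exact h
  have hE0 : En 0 = 0 := by
    have h1 : Tendsto En atTop (𝓝 (En 0)) :=
      Tendsto.congr' (by filter_upwards [eventually_ge_atTop (0:ℝ)] with t ht
        using (hEconst t ht).symm) tendsto_const_nhds
    exact tendsto_nhds_unique h1 hElim
  have henergy : ∀ t ∈ Set.Ici (0:ℝ), ⟪ξ' t, ξ' t⟫ = -2 * V (ξ t) := by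
    intro t ht
    have h := hEconst t ht
    rw [hE0] at h
    have : (1/2 : ℝ) * ⟪ξ' t, ξ' t⟫ + V (ξ t) = 0 := h
    linarith
  -- choice of T
  have hδev : ∀ᶠ t in atTop, ‖ξ t‖ < δ := by
    have := hξlim (Metric.ball_mem_nhds 0 hδ)
    simpa [mem_ball_zero_iff] using this
  obtain ⟨T₀, hT₀⟩ := eventually_atTop.mp hδev
  set T := max T₀ 0 with hTdef
  have hT : 0 ≤ T := le_max_right _ _
  have hTsmall : ∀ t, T ≤ t → ‖ξ t‖ < δ := fun t htt =>
    hT₀ t ((le_max_left _ _).trans htt)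
  -- r and its derivatives
  set r : ℝ → ℝ := fun t => ⟪ξ t, ξ t⟫ with hrdef
  set ρ : ℝ → ℝ := fun t => 2 * ⟪ξ t, ξ' t⟫ with hρdef
  set σ : ℝ → ℝ := fun t => 2 * (⟪ξ t, -gradient V (ξ t)⟫ + ⟪ξ' t, ξ' t⟫) with hσdef
  have hrnn : ∀ t, 0 ≤ r t := fun t => real_inner_self_nonneg
  have hrsq : ∀ t, r t = ‖ξ t‖ ^ 2 := fun t => real_inner_self_eq_norm_sq _
  have hr' : ∀ t ∈ Set.Ici (0:ℝ), HasDerivWithinAt r (ρ t) (Set.Ici 0) t := by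
    intro t ht
    have h1 := (hd1 t ht).inner ℝ (hd1 t ht)
    have hval : ⟪ξ t, ξ' t⟫ + ⟪ξ' t, ξ t⟫ = ρ t := by
      show ⟪ξ t, ξ' t⟫ + ⟪ξ' t, ξ t⟫ = 2 * ⟪ξ t, ξ' t⟫
      rw [real_inner_comm (ξ' t) (ξ t)]; ring
    rw [hval] at h1
    exact h1
  have hρ' : ∀ t ∈ Set.Ici (0:ℝ), HasDerivWithinAt ρ (σ t) (Set.Ici 0) t := by
    intro t ht
    have h1 := ((hd1 t ht).inner ℝ (hd2 t ht)).const_mul (2:ℝ)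
    exact h1
  -- key differential inequality
  have hkey : ∀ t, T ≤ t → a ^ 2 * r t ≤ σ t := by
    intro t htt
    have ht0 : (0:ℝ) ≤ t := hT.trans htt
    obtain ⟨e1, e2, e3, e4⟩ := hest (ξ t) (hTsmall t htt)
    have hen := henergy t ht0
    have hne : ⟪ξ t, -gradient V (ξ t)⟫ = -⟪gradient V (ξ t), ξ t⟫ := by
      rw [inner_neg_right, real_inner_comm]
    have hrt := hrsq t
    have hsq : 0 < a ^ 2 := pow_pos ha 2
    rw [hσdef]
    simp only
    rw [hne, hen, hrt]
    nlinarith [sq_nonneg (‖ξ t‖), e1, e3]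
  -- G ≤ 0 on [T, ∞)
  set G : ℝ → ℝ := fun t => ρ t + a * r t with hGdef
  have hG' : ∀ t ∈ Set.Ici (0:ℝ), HasDerivWithinAt G (σ t + a * ρ t) (Set.Ici 0) t :=
    fun t ht => (hρ' t ht).add ((hr' t ht).const_mul a)
  have hGlim : Tendsto G atTop (𝓝 0) := by
    have h1 : Tendsto r atTop (𝓝 (0:ℝ)) := by
      rw [show (0:ℝ) = ⟪(0:E2), (0:E2)⟫ by simp]
      exact hξlim.inner hξlim
    have h2 : Tendsto ρ atTop (𝓝 (0:ℝ)) := by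
      rw [show (0:ℝ) = 2 * ⟪(0:E2), (0:E2)⟫ by simp]
      exact (hξlim.inner hξ'lim).const_mul (2:ℝ)
    have h3 := h2.add (h1.const_mul a)
    rw [show (0:ℝ) = 0 + a * 0 by ring]
    exact h3
  have hGle : ∀ t, T ≤ t → G t ≤ 0 := by
    intro t₀ ht₀T
    by_contra hpos
    push_neg at hpos
    have ht₀0 : (0:ℝ) ≤ t₀ := hT.trans ht₀T
    -- the function G t * exp (-(a t)) is monotone on [t₀, ∞)
    have hmono : MonotoneOn (fun t => G t * Real.exp (-a * t)) (Set.Ici t₀) := by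
      apply mono_aux ht₀0 (f' := fun t => (σ t + a * ρ t) * Real.exp (-a * t)
          + G t * (Real.exp (-a * t) * (-a)))
      · intro t ht
        exact (hG' t ht).mul (exp_deriv_aux (-a) t).hasDerivWithinAt
      · intro t htt
        have h1 := hkey t (ht₀T.trans htt.le)
        have h2 : σ t + a * ρ t - a * G t = σ t - a ^ 2 * r t := by
          rw [hGdef]; simp only; ring
        have h3 : 0 ≤ σ t + a * ρ t - a * G t := by rw [h2]; linarith
        have h4 := (Real.exp_pos (-a * t)).le
        nlinarith [Real.exp_pos (-a * t)]
    -- hence G t ≥ G t₀ > 0 for all t ≥ t₀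
    have hGge : ∀ t, t₀ ≤ t → G t₀ ≤ G t := by
      intro t htt
      have h1 : G t₀ * Real.exp (-a * t₀) ≤ G t * Real.exp (-a * t) :=
        hmono (Set.self_mem_Ici) (Set.mem_Ici.mpr htt) htt
      have h2 : Real.exp (-a * t) ≤ Real.exp (-a * t₀) := by
        apply Real.exp_le_exp.mpr
        nlinarith
      have he1 := Real.exp_pos (-a * t)
      have he2 := Real.exp_pos (-a * t₀)
      have hGtpos : 0 < G t := by
        by_contra hle
        push_neg at hle
        have hh : G t * Real.exp (-a * t) ≤ 0 := mul_nonpos_of_nonpos_of_nonneg hle he1.le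
        have h0 : 0 < G t₀ * Real.exp (-a * t₀) := mul_pos hpos he2
        linarith
      have h6 : G t * Real.exp (-a * t) ≤ G t * Real.exp (-a * t₀) :=
        mul_le_mul_of_nonneg_left h2 hGtpos.le
      have h7 : G t₀ * Real.exp (-a * t₀) ≤ G t * Real.exp (-a * t₀) := by linarith
      exact le_of_mul_le_mul_right h7 he2
    have hev : ∀ᶠ t in atTop, G t < G t₀ := by
      have := Metric.tendsto_atTop.mp hGlim (G t₀) hpos
      obtain ⟨N, hN⟩ := this
      rw [eventually_atTop]
      refine ⟨N, fun n hn => ?_⟩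
      have := hN n hn
      rw [Real.dist_eq, sub_zero] at this
      exact lt_of_abs_lt this
    obtain ⟨t₁, ht₁, ht₁'⟩ := (hev.and (eventually_ge_atTop t₀)).exists
    exact absurd (hGge t₁ ht₁') (not_le.mpr ht₁)
  -- decay of r
  have hanti : AntitoneOn (fun t => r t * Real.exp (a * t)) (Set.Ici T) := by
    apply anti_aux hT (f' := fun t => ρ t * Real.exp (a * t) + r t * (Real.exp (a * t) * a))
    · intro t ht
      exact (hr' t ht).mul (exp_deriv_aux a t).hasDerivWithinAt
    · intro t htt
      have h1 := hGle t htt.le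
      have h2 : ρ t * Real.exp (a * t) + r t * (Real.exp (a * t) * a)
          = Real.exp (a * t) * G t := by rw [hGdef]; simp only; ring
      rw [h2]
      exact mul_nonpos_of_nonneg_of_nonpos (Real.exp_pos _).le h1
  set C₁ : ℝ := r T * Real.exp (a * T) with hC₁def
  have hC₁nn : 0 ≤ C₁ := mul_nonneg (hrnn T) (Real.exp_pos _).le
  have hrdecay : ∀ t, T ≤ t → r t ≤ C₁ * Real.exp (-(a * t)) := by
    intro t htt
    have h1 := hanti Set.self_mem_Ici (Set.mem_Ici.mpr htt) htt
    have h2 : r t = r t * Real.exp (a * t) * Real.exp (-(a * t)) := by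
      rw [mul_assoc, ← Real.exp_add]
      simp
    rw [h2]
    exact mul_le_mul_of_nonneg_right h1 (Real.exp_pos _).le
  -- final exponential bounds for t ≥ T
  set lam : ℝ := a / 2 with hlamdef
  have hlampos : 0 < lam := by positivity
  have hxibound : ∀ t, T ≤ t → ‖ξ t‖ ≤ Real.sqrt C₁ * Real.exp (-(lam * t)) := by
    intro t htt
    have h1 : ‖ξ t‖ = Real.sqrt (r t) := by
      rw [hrsq t, Real.sqrt_sq (norm_nonneg _)]
    rw [h1]
    calc Real.sqrt (r t) ≤ Real.sqrt (C₁ * Real.exp (-(a * t))) :=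
          Real.sqrt_le_sqrt (hrdecay t htt)
      _ = Real.sqrt C₁ * Real.sqrt (Real.exp (-(a * t))) := Real.sqrt_mul hC₁nn _
      _ = Real.sqrt C₁ * Real.exp (-(lam * t)) := by
          rw [sqrt_exp_eq]
          congr 1
          rw [hlamdef]
          ring
  have hxi'bound : ∀ t, T ≤ t → ‖ξ' t‖ ≤ Real.sqrt K * ‖ξ t‖ := by
    intro t htt
    have ht0 : (0:ℝ) ≤ t := hT.trans htt
    obtain ⟨e1, e2, e3, e4⟩ := hest (ξ t) (hTsmall t htt)
    have hen := henergy t ht0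
    have hsq' : ‖ξ' t‖ ^ 2 ≤ K * ‖ξ t‖ ^ 2 := by
      have := real_inner_self_eq_norm_sq (ξ' t)
      rw [hen] at this
      nlinarith [e4]
    have h2 : ‖ξ' t‖ = Real.sqrt (‖ξ' t‖ ^ 2) := (Real.sqrt_sq (norm_nonneg _)).symm
    rw [h2]
    calc Real.sqrt (‖ξ' t‖ ^ 2) ≤ Real.sqrt (K * ‖ξ t‖ ^ 2) := Real.sqrt_le_sqrt hsq'
      _ = Real.sqrt K * Real.sqrt (‖ξ t‖ ^ 2) := Real.sqrt_mul hKpos.le _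
      _ = Real.sqrt K * ‖ξ t‖ := by rw [Real.sqrt_sq (norm_nonneg _)]
  -- bound on [0, T]
  have hφcont : ContinuousOn (fun t => ‖ξ t‖ + ‖ξ' t‖) (Set.Icc 0 T) := by
    have hc1 : ContinuousOn ξ (Set.Icc 0 T) := fun s hs =>
      ((hd1 s hs.1).continuousWithinAt).mono Set.Icc_subset_Ici_self
    have hc2 : ContinuousOn ξ' (Set.Icc 0 T) := fun s hs =>
      ((hd2 s hs.1).continuousWithinAt).mono Set.Icc_subset_Ici_self
    exact (hc1.norm).add (hc2.norm)
  obtain ⟨z, hz, hzmax⟩ := isCompact_Icc.exists_isMaxOn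
    (Set.nonempty_Icc.mpr hT) hφcont
  set B : ℝ := ‖ξ z‖ + ‖ξ' z‖ with hBdef
  have hBnn : 0 ≤ B := add_nonneg (norm_nonneg _) (norm_nonneg _)
  set C₂ : ℝ := (1 + Real.sqrt K) * Real.sqrt C₁ with hC₂def
  have hC₂nn : 0 ≤ C₂ := mul_nonneg (by positivity) (Real.sqrt_nonneg _)
  refine ⟨B * Real.exp (lam * T) + C₂ + 1, lam, ?_, hlampos, ?_⟩
  · have := mul_nonneg hBnn (Real.exp_pos (lam * T)).le
    linarith
  · intro t ht
    have hexppos := Real.exp_pos (-(lam * t))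
    rcases le_or_gt T t with hcase | hcase
    · -- t ≥ T
      have h1 := hxibound t hcase
      have h2 := hxi'bound t hcase
      have h3 : ‖ξ t‖ + ‖ξ' t‖ ≤ (1 + Real.sqrt K) * ‖ξ t‖ := by
        have : (0:ℝ) ≤ Real.sqrt K := Real.sqrt_nonneg _
        nlinarith [norm_nonneg (ξ t)]
      have h4 : (1 + Real.sqrt K) * ‖ξ t‖ ≤ C₂ * Real.exp (-(lam * t)) := by
        rw [hC₂def, mul_assoc]
        apply mul_le_mul_of_nonneg_left h1 (by positivity)
      have h5 : C₂ * Real.exp (-(lam * t)) ≤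
          (B * Real.exp (lam * T) + C₂ + 1) * Real.exp (-(lam * t)) := by
        apply mul_le_mul_of_nonneg_right _ hexppos.le
        have := mul_nonneg hBnn (Real.exp_pos (lam * T)).le
        linarith
      linarith
    · -- 0 ≤ t < T
      have hmem : t ∈ Set.Icc 0 T := ⟨ht, hcase.le⟩
      have h1 : ‖ξ t‖ + ‖ξ' t‖ ≤ B := hzmax hmem
      have h2 : Real.exp (lam * T) * Real.exp (-(lam * t)) = Real.exp (lam * T - lam * t) := by
        rw [← Real.exp_add]; ring_nf
      have h3 : 1 ≤ Real.exp (lam * T - lam * t) := by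
        have h4 : lam * t ≤ lam * T := mul_le_mul_of_nonneg_left hcase.le hlampos.le
        have h5 : 0 ≤ lam * T - lam * t := by linarith
        have := Real.add_one_le_exp (lam * T - lam * t)
        linarith
      have h5 : B ≤ B * Real.exp (lam * T) * Real.exp (-(lam * t)) := by
        rw [mul_assoc, h2]
        exact le_mul_of_one_le_right hBnn h3
      calc ‖ξ t‖ + ‖ξ' t‖ ≤ B := h1
        _ ≤ B * Real.exp (lam * T) * Real.exp (-(lam * t)) := h5
        _ ≤ (B * Real.exp (lam * T) + C₂ + 1) * Real.exp (-(lam * t)) := by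
            apply mul_le_mul_of_nonneg_right _ hexppos.le
            linarith [hC₂nn]
end
end
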